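/- arXiv:2410.04586 — 7 statements merged into one kernel-verified Lean document; each statement's English description precedes it below -/
import Mathlib

section
/- The element t^d lies in the field of fractions of R and is integral over R (it satisfies the monic polynomial X^e - t^{de}), but t^d is not an element of R when e ≥ 2; hence R is not integrally closed. -/
open MvPolynomial

/-!
In `R`, `b = (s t^{d-1})^e` and `a = s^{e-1} t^{de-(e-1)} · s t^{d-1}` satisfy `b t^d = a`, and
`(t^d)^e = t^{de} ∈ R`, so `a^e = t^{de} b^e`. In an integrally closed domain `b^e ∣ a^e` forces
`b ∣ a`, i.e. `t^d ∈ R`. That fails: sending `s ↦ 0` and `t` to a generator of the group algebra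
`k[ℤ/de]` maps every generator of `R` to `0` or `1`, but `t^d` to a non-scalar.
-/

/-- Generators of the coordinate ring of the weighted rational curve of type `(d,e)`:
`s^{d-i} t^i` for `0 ≤ i ≤ d-1` and `s^{e-1-j} t^{de-(e-1)+j}` for `0 ≤ j ≤ e-1`. -/
noncomputable def wrcGens (k : Type*) [Field k] (d e : ℕ) : Set (MvPolynomial (Fin 2) k) :=
  ((fun i => X 0 ^ (d - i) * X 1 ^ i) '' Set.Iic (d - 1)) ∪
  ((fun j => X 0 ^ (e - 1 - j) * X 1 ^ (d * e - (e - 1) + j)) '' Set.Iic (e - 1))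

theorem Subalgebra.not_isIntegrallyClosed_of_pow_mem {k S : Type*} [CommRing k] [CommRing S]
    [IsDomain S] [Algebra k S] (R : Subalgebra k S) {x b : S} {n : ℕ} (hn : n ≠ 0)
    (hxn : x ^ n ∈ R) (hb : b ∈ R) (hb0 : b ≠ 0) (hbx : b * x ∈ R) (hx : x ∉ R) :
    ¬ IsIntegrallyClosed R := by
  intro _
  have hdvd : (⟨b, hb⟩ : R) ^ n ∣ ⟨b * x, hbx⟩ ^ n :=
    ⟨⟨x ^ n, hxn⟩, Subtype.ext (by simp only [SubmonoidClass.mk_pow, MulMemClass.mk_mul_mk]; ring)⟩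
  obtain ⟨y, hy⟩ := (IsIntegrallyClosed.pow_dvd_pow_iff hn).mp hdvd
  have hxy : x = y := mul_left_cancel₀ hb0 (congrArg Subtype.val hy)
  exact hx (hxy ▸ y.2)

theorem AddMonoidAlgebra.single_one_mem_bot_iff {k G : Type*} [CommSemiring k] [Nontrivial k]
    [AddMonoid G] {m : G} :
    single m (1 : k) ∈ (⊥ : Subalgebra k (AddMonoidAlgebra k G)) ↔ m = 0 := by
  refine ⟨fun h => ?_, fun h => h ▸ one_mem _⟩
  obtain ⟨c, hc⟩ := Algebra.mem_bot.mp h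
  rw [AddMonoidAlgebra.coe_algebraMap, Function.comp_apply] at hc
  rcases AddMonoidAlgebra.single_inj.mp hc with ⟨h0, -⟩ | ⟨-, h1⟩
  · exact h0.symm
  · exact absurd h1 one_ne_zero

noncomputable def cyclicEval (k : Type*) [CommSemiring k] (n : ℕ) :
    MvPolynomial (Fin 2) k →ₐ[k] AddMonoidAlgebra k (ZMod n) :=
  aeval ![0, AddMonoidAlgebra.single 1 1]

theorem cyclicEval_X_pow_mul_X_pow (k : Type*) [CommSemiring k] (n a b : ℕ) :
    cyclicEval k n (X 0 ^ a * X 1 ^ b) =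
      if a = 0 then AddMonoidAlgebra.single (b : ZMod n) 1 else 0 := by
  split_ifs with ha <;> simp [cyclicEval, AddMonoidAlgebra.single_pow, ha]

section WeightedRationalCurve

variable {k : Type*} [Field k] {d e : ℕ}

theorem cyclicEval_mem_bot_of_mem_wrcGens (hd : 1 ≤ d) {g : MvPolynomial (Fin 2) k}
    (hg : g ∈ wrcGens k d e) : cyclicEval k (d * e) g ∈ (⊥ : Subalgebra k _) := by
  rcases hg with ⟨i, hi, rfl⟩ | ⟨j, hj, rfl⟩
  · rw [cyclicEval_X_pow_mul_X_pow, if_neg (by rw [Set.mem_Iic] at hi; omega)]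
    exact zero_mem _
  · rw [cyclicEval_X_pow_mul_X_pow]
    split_ifs with hj0
    · have hje : d * e - (e - 1) + j = d * e := by
        rw [Set.mem_Iic] at hj; have := Nat.le_mul_of_pos_left e hd; omega
      rw [hje, ZMod.natCast_self]
      exact one_mem _
    · exact zero_mem _

theorem X_one_pow_notMem_adjoin_wrcGens (hd : 1 ≤ d) (he : 2 ≤ e) :
    (X 1 : MvPolynomial (Fin 2) k) ^ d ∉ Algebra.adjoin k (wrcGens k d e) := by
  intro hmem
  have hle : Algebra.adjoin k (wrcGens k d e) ≤
      (⊥ : Subalgebra k _).comap (cyclicEval k (d * e)) :=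
    Algebra.adjoin_le fun g hg => cyclicEval_mem_bot_of_mem_wrcGens hd hg
  have hbot := hle hmem
  rw [Subalgebra.mem_comap, ← one_mul (X 1 ^ d), ← pow_zero (X 0), cyclicEval_X_pow_mul_X_pow,
    if_pos rfl, AddMonoidAlgebra.single_one_mem_bot_iff, ZMod.natCast_eq_zero_iff] at hbot
  have : d * e ≤ d := Nat.le_of_dvd hd hbot
  nlinarith

theorem X_zero_mul_X_one_pow_mem_wrcGens (hd : 1 ≤ d) :
    (X 0 * X 1 ^ (d - 1) : MvPolynomial (Fin 2) k) ∈ wrcGens k d e :=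
  Or.inl ⟨d - 1, Set.self_mem_Iic, by simp only [show d - (d - 1) = 1 by omega, pow_one]⟩

theorem X_zero_pow_mul_X_one_pow_mem_wrcGens :
    (X 0 ^ (e - 1) * X 1 ^ (d * e - (e - 1)) : MvPolynomial (Fin 2) k) ∈ wrcGens k d e :=
  Or.inr ⟨0, Nat.zero_le _, by simp⟩

theorem X_one_pow_mul_mem_wrcGens (hd : 1 ≤ d) :
    (X 1 ^ (d * e) : MvPolynomial (Fin 2) k) ∈ wrcGens k d e := by
  refine Or.inr ⟨e - 1, Set.self_mem_Iic, ?_⟩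
  have : e - 1 ≤ d * e := (Nat.sub_le e 1).trans (Nat.le_mul_of_pos_left e hd)
  simp only [Nat.sub_self, pow_zero, one_mul, Nat.sub_add_cancel this]

theorem X_zero_mul_X_one_pow_pow_mul_X_one_pow (hd : 1 ≤ d) (he : 1 ≤ e) :
    (X 0 * X 1 ^ (d - 1) : MvPolynomial (Fin 2) k) ^ e * X 1 ^ d =
      X 0 ^ (e - 1) * X 1 ^ (d * e - (e - 1)) * (X 0 * X 1 ^ (d - 1)) := by
  obtain ⟨d, rfl⟩ := Nat.exists_eq_add_of_le' hd
  obtain ⟨e, rfl⟩ := Nat.exists_eq_add_of_le' he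
  have : (d + 1) * (e + 1) - e = d * (e + 1) + 1 := by rw [add_mul]; omega
  simp only [Nat.add_sub_cancel, this]
  ring

end WeightedRationalCurve

/-- `t^d` lies in the fraction field of `R`, is integral over `R` (root of `X^e - t^{de}`),
but is not in `R`; hence `R` is not integrally closed. -/
theorem stmt0 (k : Type*) [Field k] (d e : ℕ) (hd : 1 ≤ d) (he : 2 ≤ e)
    (R : Subalgebra k (MvPolynomial (Fin 2) k))
    (hR : R = Algebra.adjoin k (wrcGens k d e)) :
    (∃ a b : R, b ≠ 0 ∧ (b : MvPolynomial (Fin 2) k) * X 1 ^ d = (a : MvPolynomial (Fin 2) k)) ∧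
    (∃ te : R, (te : MvPolynomial (Fin 2) k) = X 1 ^ (d * e) ∧
      Polynomial.aeval ((X 1 : MvPolynomial (Fin 2) k) ^ d)
        (Polynomial.X ^ e - Polynomial.C te) = 0) ∧
    IsIntegral R ((X 1 : MvPolynomial (Fin 2) k) ^ d) ∧
    (X 1 : MvPolynomial (Fin 2) k) ^ d ∉ R ∧
    ¬ IsIntegrallyClosed R := by
  subst hR
  have hg : X 0 * X 1 ^ (d - 1) ∈ Algebra.adjoin k (wrcGens k d e) :=
    Algebra.subset_adjoin (X_zero_mul_X_one_pow_mem_wrcGens hd)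
  have hg' : X 0 ^ (e - 1) * X 1 ^ (d * e - (e - 1)) ∈ Algebra.adjoin k (wrcGens k d e) :=
    Algebra.subset_adjoin X_zero_pow_mul_X_one_pow_mem_wrcGens
  have hte : X 1 ^ (d * e) ∈ Algebra.adjoin k (wrcGens k d e) :=
    Algebra.subset_adjoin (X_one_pow_mul_mem_wrcGens hd)
  have hb0 : (X 0 * X 1 ^ (d - 1) : MvPolynomial (Fin 2) k) ^ e ≠ 0 :=
    pow_ne_zero _ (mul_ne_zero (X_ne_zero _) (pow_ne_zero _ (X_ne_zero _)))
  have hkey := X_zero_mul_X_one_pow_pow_mul_X_one_pow (k := k) hd (by omega : 1 ≤ e)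
  have hroot : Polynomial.aeval ((X 1 : MvPolynomial (Fin 2) k) ^ d)
      (Polynomial.X ^ e - Polynomial.C (⟨_, hte⟩ : Algebra.adjoin k (wrcGens k d e))) = 0 := by
    simp [← pow_mul]
  have hnotMem := X_one_pow_notMem_adjoin_wrcGens (k := k) hd he
  refine ⟨⟨⟨_, mul_mem hg' hg⟩, ⟨_, pow_mem hg e⟩, fun h => hb0 (congrArg Subtype.val h), hkey⟩,
    ⟨⟨_, hte⟩, rfl, hroot⟩, ⟨_, Polynomial.monic_X_pow_sub_C _ (by omega), hroot⟩, hnotMem, ?_⟩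
  refine Subalgebra.not_isIntegrallyClosed_of_pow_mem _ (n := e) (by omega) ?_ (pow_mem hg e) hb0
    (hkey ▸ mul_mem hg' hg) hnotMem
  rwa [← pow_mul]
end

section
/- The double sum ∑_{k=1}^{d+e−2} ∑_{i=0}^{k+1} (−1)^k (k+1−i) · C(d−1, k+1−i) · z^{k+1−i} · C(e,i) · z^{ei} equals (d−1) z [ (1−z)^{d−2} (1−z^e)^e − 1 ], as polynomials in z. -/
/-!
Put `a j = (-1)^j j C(d-1,j) z^j` and `b i = (-1)^i C(e,i) z^(ei)`. Since `(-1)^k = -(-1)^(j+i)` for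
`j = k+1-i`, the double sum is minus the Cauchy product `(∑ a) (∑ b)` with its antidiagonals
`j + i = 0, 1` removed; these contribute only `a 1 * b 0 = -(d-1) z`. By the binomial theorem
`∑ b = (1 - z^e)^e`, and `∑ a = z (d/dz) (1 - z)^(d-1) = -(d-1) z (1 - z)^(d-2)`.
-/

open Polynomial Finset

theorem sum_range_mul_sum_range_eq_sum_sum_range {M : Type*} [NonUnitalNonAssocSemiring M]
    (a b : ℕ → M) {p q : ℕ} (ha : ∀ j, p < j → a j = 0) (hb : ∀ i, q < i → b i = 0) :
    (∑ j ∈ range (p + 1), a j) * ∑ i ∈ range (q + 1), b i =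
      ∑ s ∈ range (p + q + 1), ∑ i ∈ range (s + 1), a (s - i) * b i := by
  rw [sum_mul_sum, ← sum_product', ← sum_fiberwise_of_maps_to (g := fun x => x.1 + x.2)
    (t := range (p + q + 1)) fun x hx => by simp only [mem_product, mem_range] at hx ⊢; omega]
  refine sum_congr rfl fun s _ => ?_
  have hfiber : {x ∈ range (p + 1) ×ˢ range (q + 1) | x.1 + x.2 = s} ⊆ antidiagonal s :=
    fun x hx => mem_antidiagonal.mpr (mem_filter.mp hx).2
  rw [sum_subset hfiber fun x hx hx' => ?_, ← Nat.sum_antidiagonal_swap]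
  · exact Nat.sum_antidiagonal_eq_sum_range_succ (fun i j => a j * b i) s
  simp only [mem_filter, mem_product, mem_range, mem_antidiagonal.mp hx, and_true, not_and_or,
    not_lt] at hx'
  rcases hx' with hp | hq
  · rw [ha _ hp, zero_mul]
  · rw [hb _ hq, mul_zero]

theorem sum_range_add_two_eq_add_add_sum_Icc {M : Type*} [AddCommMonoid M] (N : ℕ)
    (f : ℕ → M) :
    ∑ s ∈ range (N + 2), f s = f 0 + f 1 + ∑ k ∈ Icc 1 N, f (k + 1) := by
  rw [sum_range_succ', range_eq_Ico, sum_eq_sum_Ico_succ_bot (by omega), Ico_add_one_right_eq_Icc,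
    zero_add, add_comm, add_assoc]

section CommRing

variable {R : Type*} [CommRing R]

theorem one_sub_pow_eq_sum_range (y : R) (n : ℕ) :
    (1 - y) ^ n = ∑ j ∈ range (n + 1), (-1) ^ j * (n.choose j : R) * y ^ j := by
  rw [sub_eq_neg_add, add_pow]
  refine sum_congr rfl fun j _ => ?_
  rw [one_pow, neg_pow]
  ring

theorem sum_range_neg_one_pow_mul_mul_choose_mul_pow (x : R) (n : ℕ) :
    ∑ j ∈ range (n + 2), (-1) ^ j * (j : R) * ((n + 1).choose j : R) * x ^ j =
      -((n + 1 : R) * x * (1 - x) ^ n) := by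
  have hshift (j : ℕ) : (-1) ^ (j + 1) * ((j + 1 : ℕ) : R) * ((n + 1).choose (j + 1) : R) *
      x ^ (j + 1) = -((n + 1 : R) * x * ((-1) ^ j * (n.choose j : R) * x ^ j)) := by
    have h := congrArg (Nat.cast (R := R)) (Nat.add_one_mul_choose_eq n j)
    push_cast at h ⊢
    linear_combination (-1 : R) ^ j * x ^ (j + 1) * h
  rw [sum_range_succ', sum_congr rfl fun j _ => hshift j, sum_neg_distrib, ← mul_sum,
    ← one_sub_pow_eq_sum_range]
  simp

theorem sum_Icc_sum_range_neg_one_pow_mul_choose_mul_pow (x : R) (m e : ℕ) :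
    ∑ k ∈ Icc 1 (m + e), ∑ i ∈ range (k + 2),
      (-1) ^ k * ((k + 1 - i : ℕ) : R) * ((m + 1).choose (k + 1 - i) : R) * (e.choose i : R) *
        x ^ (k + 1 - i) * x ^ (e * i) =
      (m + 1 : R) * x * ((1 - x) ^ m * (1 - x ^ e) ^ e - 1) := by
  set a : ℕ → R := fun j => (-1) ^ j * (j : R) * ((m + 1).choose j : R) * x ^ j
  set b : ℕ → R := fun i => (-1) ^ i * (e.choose i : R) * (x ^ e) ^ i
  have hterm (k i : ℕ) (hi : i ∈ range (k + 2)) :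
      (-1) ^ k * ((k + 1 - i : ℕ) : R) * ((m + 1).choose (k + 1 - i) : R) * (e.choose i : R) *
        x ^ (k + 1 - i) * x ^ (e * i) = -(a (k + 1 - i) * b i) := by
    have hsign : (-1 : R) ^ (k + 1 - i) * (-1) ^ i = -(-1) ^ k := by
      rw [← pow_add, Nat.sub_add_cancel (by simpa [Nat.lt_succ_iff] using hi), pow_succ]
      ring
    simp only [a, b, ← pow_mul]
    linear_combination (((k + 1 - i : ℕ) : R) * ((m + 1).choose (k + 1 - i) : R) *
      (e.choose i : R) * x ^ (k + 1 - i) * x ^ (e * i)) * hsign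
  have ha (j : ℕ) (hj : m + 1 < j) : a j = 0 := by simp [a, Nat.choose_eq_zero_of_lt hj]
  have hb (i : ℕ) (hi : e < i) : b i = 0 := by simp [b, Nat.choose_eq_zero_of_lt hi]
  have hF0 : ∑ i ∈ range (0 + 1), a (0 - i) * b i = 0 := by simp [a]
  have hF1 : ∑ i ∈ range (1 + 1), a (1 - i) * b i = -((m + 1 : R) * x) := by
    simp [sum_range_succ, a, b, add_mul, add_comm]
  have hprod := sum_range_mul_sum_range_eq_sum_sum_range a b ha hb
  rw [sum_range_neg_one_pow_mul_mul_choose_mul_pow, ← one_sub_pow_eq_sum_range,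
    show m + 1 + e + 1 = m + e + 2 by ring, sum_range_add_two_eq_add_add_sum_Icc, hF0, hF1] at hprod
  rw [sum_congr rfl fun k _ => sum_congr rfl (hterm k)]
  simp only [sum_neg_distrib]
  linear_combination hprod

end CommRing

theorem stmt3_general (d e : ℕ) (hd : 2 ≤ d) :
    (∑ k ∈ Finset.Icc 1 (d + e - 2), ∑ i ∈ Finset.range (k + 2),
        C ((-1) ^ k * ((k + 1 - i : ℕ) : ℤ) * (((d - 1).choose (k + 1 - i) : ℕ) : ℤ) *
            ((e.choose i : ℕ) : ℤ)) * X ^ (k + 1 - i) * X ^ (e * i)) =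
      C (((d - 1 : ℕ) : ℤ)) * X * ((1 - X) ^ (d - 2) * (1 - X ^ e) ^ e - 1) := by
  obtain ⟨m, rfl⟩ : ∃ m, d = m + 2 := ⟨d - 2, by omega⟩
  rw [show m + 2 + e - 2 = m + e by omega, show m + 2 - 1 = m + 1 by omega, Nat.add_sub_cancel]
  simp only [map_mul, map_pow, map_neg, map_one, map_natCast]
  push_cast
  exact sum_Icc_sum_range_neg_one_pow_mul_choose_mul_pow X m e

/-- `∑_{k=1}^{d+e−2} ∑_{i=0}^{k+1} (−1)^k (k+1−i) C(d−1,k+1−i) z^{k+1−i} C(e,i) z^{ei}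
      = (d−1) z [(1−z)^{d−2}(1−z^e)^e − 1]` in `ℤ[z]`. -/
theorem stmt3 (d e : ℕ) (hd : 2 ≤ d) (he : 1 ≤ e) :
    (∑ k ∈ Finset.Icc 1 (d + e - 2), ∑ i ∈ Finset.range (k + 2),
        C ((-1) ^ k * ((k + 1 - i : ℕ) : ℤ) * (((d - 1).choose (k + 1 - i) : ℕ) : ℤ) *
            ((e.choose i : ℕ) : ℤ)) * X ^ (k + 1 - i) * X ^ (e * i)) =
      C (((d - 1 : ℕ) : ℤ)) * X * ((1 - X) ^ (d - 2) * (1 - X ^ e) ^ e - 1) :=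
  stmt3_general d e hd
end

section
/- Let J ⊆ k[x₀,...,x_{d−1},y₀,...,y_{e−1}] be the monomial ideal generated by: x_{i+1}x_j for 0 ≤ i < j ≤ d−2; y_{i+1}y_j for 0 ≤ i < j ≤ e−2; x_j y_{i+1} for 0 ≤ i ≤ e−2, 0 ≤ j ≤ d−2; x_i y₀ for 0 ≤ i ≤ d−2; and y₀ y_i for 0 ≤ i ≤ e−2. Then the monomials not in J are exactly those of the forms x₀^a x_i x_{d−1}^b (0 ≤ i ≤ d−1), x_{d−1}^a y_i y_{e−1}^b (0 ≤ i ≤ e−1), together with 1. -/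
/-!
Every generator of `J` is a product `X u * X v` of two variables, so a monomial lies outside `J`
exactly when its exponent vector dominates none of these pairs. The pairs are: two of the middle
variables `x₁, …, x_{d−2}`; two of `y₀, …, y_{e−2}`; or one of `x₀, …, x_{d−2}` together with any `y`.
Hence a standard monomial without `y`'s has at most one middle factor between a power of `x₀` and
a power of `x_{d−1}`, while a standard monomial with some `y` has no `x` other than `x_{d−1}` and at
most one factor among `y₀, …, y_{e−2}` in front of a power of `y_{e−1}`.
-/

open MvPolynomial

/-- The generators of the monomial ideal `J` (the `x`-variables are indexed by
`Sum.inl`, the `y`-variables by `Sum.inr`). -/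
def wrcJGens (k : Type*) [Field k] (d e : ℕ) : Set (MvPolynomial (ℕ ⊕ ℕ) k) :=
  {p | ∃ i j : ℕ, i < j ∧ j ≤ d - 2 ∧ p = X (Sum.inl (i + 1)) * X (Sum.inl j)} ∪
  {p | ∃ i j : ℕ, i < j ∧ j ≤ e - 2 ∧ p = X (Sum.inr (i + 1)) * X (Sum.inr j)} ∪
  {p | ∃ i j : ℕ, i ≤ e - 2 ∧ j ≤ d - 2 ∧ p = X (Sum.inl j) * X (Sum.inr (i + 1))} ∪
  {p | ∃ i : ℕ, i ≤ d - 2 ∧ p = X (Sum.inl i) * X (Sum.inr 0)} ∪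
  {p | ∃ i : ℕ, i ≤ e - 2 ∧ p = X (Sum.inr 0) * X (Sum.inr i)}

open Finsupp

section PairsBelow

variable {α : Type*}

theorem single_add_single_le_of_ne {u v : α} {f : α →₀ ℕ} (huv : u ≠ v) (hu : f u ≠ 0)
    (hv : f v ≠ 0) : single u 1 + single v 1 ≤ f := by
  classical
  intro w
  simp only [Finsupp.coe_add, Pi.add_apply, single_apply]
  split_ifs <;> simp_all <;> omega

theorem single_add_single_self_le {u : α} {f : α →₀ ℕ} (hu : 2 ≤ f u) :
    single u 1 + single u 1 ≤ f := by
  rwa [← single_add, single_le_iff]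

theorem eq_or_eq_of_single_add_single_le {u i w v v' : α} {a b : ℕ}
    (h : single v 1 + single v' 1 ≤ single u a + single i 1 + single w b) :
    (v = u ∨ v = w ∨ v' = u ∨ v' = w) ∧ (v = u ∨ v = i ∨ v = w) ∧
      (v' = u ∨ v' = i ∨ v' = w) := by
  classical
  have hv := h v
  have hv' := h v'
  simp only [Finsupp.coe_add, Pi.add_apply, single_apply] at hv hv'
  split_ifs at hv hv' <;> grind

theorem eq_single_add_single_add_single_of_no_pair {u w : α} {L : Set α} (hu : u ∉ L)
    (hw : w ∉ L) (huw : u ≠ w) {f : α →₀ ℕ}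
    (hsupp : ∀ v, f v ≠ 0 → v = u ∨ v = w ∨ v ∈ L)
    (hL : ∀ v ∈ L, ∀ v' ∈ L, ¬ single v 1 + single v' 1 ≤ f) :
    (∃ i ∈ L, f = single u (f u) + single i 1 + single w (f w)) ∨
      f = single u (f u) + single w (f w) := by
  classical
  by_cases h : ∃ i ∈ L, f i ≠ 0
  · obtain ⟨i, hi, hfi⟩ := h
    have hfi_eq_one : f i = 1 := by
      by_contra hne
      exact hL i hi i hi (single_add_single_self_le (by omega))
    have hL_zero : ∀ v ∈ L, v ≠ i → f v = 0 := fun v hv hvi => by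
      by_contra hne
      exact hL i hi v hv (single_add_single_le_of_ne (Ne.symm hvi) hfi hne)
    refine Or.inl ⟨i, hi, ?_⟩
    ext v
    have := hsupp v
    simp only [Finsupp.coe_add, Pi.add_apply, single_apply]
    split_ifs <;> grind
  · push Not at h
    refine Or.inr ?_
    ext v
    have := hsupp v
    simp only [Finsupp.coe_add, Pi.add_apply, single_apply]
    split_ifs <;> grind

end PairsBelow

section Monomials

variable {σ R : Type*} [CommSemiring R]

theorem X_mul_X_eq_monomial (u v : σ) :
    (X u * X v : MvPolynomial σ R) = monomial (single u 1 + single v 1) 1 := by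
  rw [X, X, monomial_mul, one_mul]

variable [Nontrivial R] {m : σ →₀ ℕ}

theorem monomial_eq_X_pow_mul_X_mul_X_pow_iff {u i w : σ} {a b : ℕ} :
    monomial m (1 : R) = X u ^ a * X i * X w ^ b ↔ m = single u a + single i 1 + single w b := by
  rw [X_pow_eq_monomial, X_pow_eq_monomial, X, monomial_mul, monomial_mul, one_mul, one_mul]
  exact monomial_left_inj one_ne_zero

theorem monomial_eq_one_iff : monomial m (1 : R) = 1 ↔ m = 0 := by
  rw [← C_1, ← monomial_zero']
  exact monomial_left_inj one_ne_zero

end Monomials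

/-- `X u * X v` is one of the generators `wrcJGens` of `J`, in either order. -/
def IsJPair (d e : ℕ) : ℕ ⊕ ℕ → ℕ ⊕ ℕ → Prop
  | .inl a, .inl b => 1 ≤ a ∧ a ≤ d - 2 ∧ 1 ≤ b ∧ b ≤ d - 2
  | .inr a, .inr b => a ≤ e - 2 ∧ b ≤ e - 2
  | .inl a, .inr b => a ≤ d - 2 ∧ b ≤ e - 1
  | .inr a, .inl b => a ≤ e - 1 ∧ b ≤ d - 2

theorem IsJPair.symm {d e : ℕ} {u v : ℕ ⊕ ℕ} (h : IsJPair d e u v) : IsJPair d e v u := by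
  rcases u with a | a <;> rcases v with b | b <;> simp only [IsJPair] at h ⊢ <;> tauto

section JIdeal

variable {d e : ℕ} {m : (ℕ ⊕ ℕ) →₀ ℕ}

theorem mem_wrcJGens_iff {k : Type*} [Field k] (he : 2 ≤ e) {p : MvPolynomial (ℕ ⊕ ℕ) k} :
    p ∈ wrcJGens k d e ↔ ∃ u v, IsJPair d e u v ∧ p = X u * X v := by
  simp only [wrcJGens, Set.mem_union, Set.mem_ofPred_eq]
  constructor
  · rintro ((((⟨i, j, hij, hj, rfl⟩ | ⟨i, j, hij, hj, rfl⟩) | ⟨i, j, hi, hj, rfl⟩) |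
      ⟨i, hi, rfl⟩) | ⟨i, hi, rfl⟩) <;>
      exact ⟨_, _, by simp only [IsJPair]; omega, rfl⟩
  · rintro ⟨u, v, huv, rfl⟩
    wlog h : toLex u ≤ toLex v generalizing u v
    · rw [mul_comm]
      exact this v u huv.symm (le_of_not_ge h)
    rcases u with a | a <;> rcases v with b | b <;> simp only [IsJPair] at huv <;> simp at h
    · exact Or.inl (Or.inl (Or.inl (Or.inl ⟨a - 1, b, by omega, huv.2.2.2, by
        rw [Nat.sub_add_cancel huv.1]⟩)))
    · rcases Nat.eq_zero_or_pos b with rfl | hb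
      · exact Or.inl (Or.inr ⟨a, huv.1, rfl⟩)
      · exact Or.inl (Or.inl (Or.inr ⟨b - 1, a, by omega, huv.1, by
          rw [Nat.sub_add_cancel hb]⟩))
    · rcases Nat.eq_zero_or_pos a with rfl | ha
      · exact Or.inr ⟨b, huv.2, rfl⟩
      · exact Or.inl (Or.inl (Or.inl (Or.inr ⟨a - 1, b, by omega, huv.2, by
          rw [Nat.sub_add_cancel ha]⟩)))

theorem monomial_mem_span_wrcJGens_iff {k : Type*} [Field k] (he : 2 ≤ e) :
    monomial m (1 : k) ∈ Ideal.span (wrcJGens k d e) ↔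
      ∃ u v, IsJPair d e u v ∧ single u 1 + single v 1 ≤ m := by
  classical
  have hgens : wrcJGens k d e = (fun s => monomial s (1 : k)) ''
      {s | ∃ u v, IsJPair d e u v ∧ s = single u 1 + single v 1} := by
    ext p
    rw [mem_wrcJGens_iff he]
    simp only [X_mul_X_eq_monomial, Set.mem_image, Set.mem_ofPred_eq]
    constructor
    · rintro ⟨u, v, huv, rfl⟩
      exact ⟨_, ⟨u, v, huv, rfl⟩, rfl⟩
    · rintro ⟨_, ⟨u, v, huv, rfl⟩, rfl⟩
      exact ⟨u, v, huv, rfl⟩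
  rw [hgens, mem_ideal_span_monomial_image, support_monomial, if_neg one_ne_zero]
  simp only [Finset.mem_singleton, forall_eq, Set.mem_ofPred_eq]
  exact ⟨fun ⟨_, ⟨u, v, huv, rfl⟩, hle⟩ => ⟨u, v, huv, hle⟩,
    fun ⟨u, v, huv, hle⟩ => ⟨_, ⟨u, v, huv, rfl⟩, hle⟩⟩

theorem normalForm_of_forall_inr_eq_zero (hd : 2 ≤ d) (hmx : ∀ i : ℕ, m (Sum.inl i) ≠ 0 → i < d)
    (hy : ∀ s, m (.inr s) = 0) (h : ∀ u v, IsJPair d e u v → ¬ single u 1 + single v 1 ≤ m) :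
    (∃ a b, ∃ i < d, m = single (.inl 0) a + single (.inl i) 1 + single (.inl (d - 1)) b) ∨
      m = 0 := by
  have hsupp : ∀ v, m v ≠ 0 →
      v = .inl 0 ∨ v = .inl (d - 1) ∨ v ∈ Sum.inl '' Set.Icc 1 (d - 2) := by
    rintro (j | s) hv
    · have := hmx j hv
      simp
      omega
    · exact absurd (hy s) hv
  have hmid : ∀ v ∈ Sum.inl '' Set.Icc 1 (d - 2), ∀ v' ∈ Sum.inl '' Set.Icc 1 (d - 2),
      ¬ single v 1 + single v' 1 ≤ m := by
    rintro _ ⟨a, ha, rfl⟩ _ ⟨b, hb, rfl⟩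
    simp only [Set.mem_Icc] at ha hb
    exact h _ _ (by simp only [IsJPair]; omega)
  rcases eq_single_add_single_add_single_of_no_pair (by simp) (by simp; omega) (by simp; omega)
    hsupp hmid with ⟨_, ⟨i, hi, rfl⟩, hm⟩ | hm
  · exact Or.inl ⟨_, _, i, by simp at hi; omega, hm⟩
  by_cases h0 : m (.inl 0) = 0
  · by_cases h1 : m (.inl (d - 1)) = 0
    · exact Or.inr (hm.trans (by simp [h0, h1]))
    · refine Or.inl ⟨0, m (.inl (d - 1)) - 1, d - 1, by omega, hm.trans ?_⟩
      rw [h0, add_assoc, ← single_add, Nat.add_sub_cancel' (Nat.one_le_iff_ne_zero.2 h1)]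
  · refine Or.inl ⟨m (.inl 0) - 1, m (.inl (d - 1)), 0, by omega, hm.trans ?_⟩
    rw [← single_add, Nat.sub_add_cancel (Nat.one_le_iff_ne_zero.2 h0)]

theorem normalForm_of_inr_ne_zero (he : 2 ≤ e)
    (hmx : ∀ i : ℕ, m (Sum.inl i) ≠ 0 → i < d) (hmy : ∀ i : ℕ, m (Sum.inr i) ≠ 0 → i < e)
    {s : ℕ} (hs : m (.inr s) ≠ 0) (h : ∀ u v, IsJPair d e u v → ¬ single u 1 + single v 1 ≤ m) :
    ∃ a b, ∃ i < e, m = single (.inl (d - 1)) a + single (.inr i) 1 + single (.inr (e - 1)) b := by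
  have hxlow : ∀ j ≤ d - 2, m (.inl j) = 0 := fun j hj => by
    by_contra hne
    have := hmy s hs
    exact h _ _ (by simp only [IsJPair]; omega) (single_add_single_le_of_ne (by simp) hne hs)
  have hsupp : ∀ v, m v ≠ 0 →
      v = .inl (d - 1) ∨ v = .inr (e - 1) ∨ v ∈ Sum.inr '' Set.Iic (e - 2) := by
    rintro (j | t) hv
    · have := hmx j hv
      have := hxlow j
      simp
      omega
    · have := hmy t hv
      simp
      omega
  have hlow : ∀ v ∈ Sum.inr '' Set.Iic (e - 2), ∀ v' ∈ Sum.inr '' Set.Iic (e - 2),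
      ¬ single v 1 + single v' 1 ≤ m := by
    rintro _ ⟨a, ha, rfl⟩ _ ⟨b, hb, rfl⟩
    simp only [Set.mem_Iic] at ha hb
    exact h _ _ (by simp only [IsJPair]; omega)
  rcases eq_single_add_single_add_single_of_no_pair (by simp) (by simp; omega) (by simp)
    hsupp hlow with ⟨_, ⟨i, hi, rfl⟩, hm⟩ | hm
  · exact ⟨_, _, i, by simp at hi; omega, hm⟩
  have hb : m (.inr (e - 1)) ≠ 0 := by
    rw [hm] at hs
    simp [single_apply] at hs
    exact hs.2
  refine ⟨m (.inl (d - 1)), m (.inr (e - 1)) - 1, e - 1, by omega, hm.trans ?_⟩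
  rw [add_assoc, ← single_add, Nat.add_sub_cancel' (Nat.one_le_iff_ne_zero.2 hb)]

theorem normalForm_of_not_exists_isJPair (hd : 2 ≤ d) (he : 2 ≤ e)
    (hmx : ∀ i : ℕ, m (Sum.inl i) ≠ 0 → i < d) (hmy : ∀ i : ℕ, m (Sum.inr i) ≠ 0 → i < e)
    (h : ¬ ∃ u v, IsJPair d e u v ∧ single u 1 + single v 1 ≤ m) :
    (∃ a b, ∃ i < d, m = single (.inl 0) a + single (.inl i) 1 + single (.inl (d - 1)) b) ∨
      (∃ a b, ∃ i < e, m = single (.inl (d - 1)) a + single (.inr i) 1 + single (.inr (e - 1)) b) ∨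
      m = 0 := by
  push Not at h
  by_cases hy : ∀ s, m (.inr s) = 0
  · exact (normalForm_of_forall_inr_eq_zero hd hmx hy h).imp_right Or.inr
  · push Not at hy
    obtain ⟨s, hs⟩ := hy
    exact Or.inr (Or.inl (normalForm_of_inr_ne_zero he hmx hmy hs h))

theorem not_exists_isJPair_of_normalForm (hd : 2 ≤ d) (he : 2 ≤ e)
    (hm : (∃ a b, ∃ i < d, m = single (.inl 0) a + single (.inl i) 1 + single (.inl (d - 1)) b) ∨
      (∃ a b, ∃ i < e, m = single (.inl (d - 1)) a + single (.inr i) 1 + single (.inr (e - 1)) b) ∨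
      m = 0) :
    ¬ ∃ u v, IsJPair d e u v ∧ single u 1 + single v 1 ≤ m := by
  rintro ⟨v, v', hvv', hle⟩
  rcases hm with ⟨a, b, i, -, rfl⟩ | ⟨a, b, i, -, rfl⟩ | rfl
  pick_goal 3
  · simpa using hle v
  all_goals
    obtain ⟨hend, hv, hv'⟩ := eq_or_eq_of_single_add_single_le hle
    rcases v with p | p <;> rcases v' with q | q <;> simp only [IsJPair] at hvv' <;>
      simp at hend hv hv' <;> omega

end JIdeal

/-- The monomials (in the variables `x₀,…,x_{d−1},y₀,…,y_{e−1}`) not in `J` are exactly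
those of the forms `x₀^a xᵢ x_{d−1}^b` (`0 ≤ i ≤ d−1`), `x_{d−1}^a yᵢ y_{e−1}^b`
(`0 ≤ i ≤ e−1`), together with `1`. -/
theorem stmt11 (k : Type*) [Field k] (d e : ℕ) (hd : 2 ≤ d) (he : 2 ≤ e)
    (m : (ℕ ⊕ ℕ) →₀ ℕ)
    (hmx : ∀ i : ℕ, m (Sum.inl i) ≠ 0 → i < d)
    (hmy : ∀ i : ℕ, m (Sum.inr i) ≠ 0 → i < e) :
    (monomial m (1 : k)) ∉ Ideal.span (wrcJGens k d e) ↔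
      ((∃ a b : ℕ, ∃ i < d, (monomial m (1 : k)) =
          X (Sum.inl 0) ^ a * X (Sum.inl i) * X (Sum.inl (d - 1)) ^ b) ∨
       (∃ a b : ℕ, ∃ i < e, (monomial m (1 : k)) =
          X (Sum.inl (d - 1)) ^ a * X (Sum.inr i) * X (Sum.inr (e - 1)) ^ b) ∨
       (monomial m (1 : k)) = 1) := by
  rw [monomial_mem_span_wrcJGens_iff he]
  simp only [monomial_eq_X_pow_mul_X_mul_X_pow_iff, monomial_eq_one_iff]
  exact ⟨normalForm_of_not_exists_isJPair hd he hmx hmy, not_exists_isJPair_of_normalForm hd he⟩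
end

section
/- With J the monomial ideal described, the weighted Hilbert function of S/J (where deg xᵢ = 1 and deg yᵢ = e) satisfies: the number of monomials of weighted degree qe + r (q ≥ 0, 0 ≤ r < e) outside J equals d(qe+r) + 1 − r. Hence S/J has the same Hilbert function as R. -/
/-!
The generators of `J` say exactly this: a monomial avoids `J` iff it has total degree at most one in
`x₁, …, x_{d-2}`, total degree at most one in `y₀, …, y_{e-2}`, and does not involve both a variable
among `x₀, …, x_{d-2}` and a `y`. So the standard monomials of weighted degree `n` are `x_{d-1}ⁿ`,
the `n(d-1)` monomials `x_{d-1}^{n-c-1} x₀^c x_t` (`c < n`, `t ≤ d-2`), and the `⌊n/e⌋ e`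
monomials `x_{d-1}^{n-e(c+1)} y_{e-1}^c y_t` (`c < ⌊n/e⌋`, `t ≤ e-1`); for `n = qe + r` this gives
`1 + n(d-1) + qe = dn + 1 - r`.
-/

open MvPolynomial

/-- The generators of the monomial ideal `J` (the `x`-variables are indexed by
`Sum.inl`, the `y`-variables by `Sum.inr`). -/
def wrcJGens12 (k : Type*) [Field k] (d e : ℕ) : Set (MvPolynomial (ℕ ⊕ ℕ) k) :=
  {p | ∃ i j : ℕ, i < j ∧ j ≤ d - 2 ∧ p = X (Sum.inl (i + 1)) * X (Sum.inl j)} ∪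
  {p | ∃ i j : ℕ, i < j ∧ j ≤ e - 2 ∧ p = X (Sum.inr (i + 1)) * X (Sum.inr j)} ∪
  {p | ∃ i j : ℕ, i ≤ e - 2 ∧ j ≤ d - 2 ∧ p = X (Sum.inl j) * X (Sum.inr (i + 1))} ∪
  {p | ∃ i : ℕ, i ≤ d - 2 ∧ p = X (Sum.inl i) * X (Sum.inr 0)} ∪
  {p | ∃ i : ℕ, i ≤ e - 2 ∧ p = X (Sum.inr 0) * X (Sum.inr i)}

namespace MonomialIdealJ

open Finsupp Finset

section Generic

variable {σ : Type*} [DecidableEq σ]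

theorem single_add_single_le_iff {a b : σ} {m : σ →₀ ℕ} :
    single a 1 + single b 1 ≤ m ↔ 1 ≤ m a ∧ 1 ≤ m b ∧ (a = b → 2 ≤ m a) := by
  constructor
  · intro h
    have ha := h a
    have hb := h b
    simp only [Finsupp.add_apply, single_apply] at ha hb
    refine ⟨?_, ?_, ?_⟩ <;> split_ifs at ha hb <;> grind
  · rintro ⟨ha, hb, hab⟩ v
    simp only [Finsupp.add_apply, single_apply]
    split_ifs <;> grind

theorem sum_apply_le_one_iff (T : Finset σ) (m : σ →₀ ℕ) :
    ∑ v ∈ T, m v ≤ 1 ↔ ∀ a ∈ T, ∀ b ∈ T, ¬ single a 1 + single b 1 ≤ m := by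
  constructor
  · intro h a ha b hb hle
    have : ∑ v ∈ T, (single a 1 + single b 1 : σ →₀ ℕ) v ≤ ∑ v ∈ T, m v :=
      sum_le_sum fun v _ => hle v
    simp [sum_add_distrib, single_apply, ha, hb] at this
    omega
  · intro h
    by_contra! h2
    obtain ⟨a, ha, hma⟩ := exists_ne_zero_of_sum_ne_zero (by omega : ∑ v ∈ T, m v ≠ 0)
    by_cases h2a : 2 ≤ m a
    · exact h a ha a ha (single_add_single_le_iff.2 ⟨by omega, by omega, fun _ => h2a⟩)
    have hrest : ∑ v ∈ T.erase a, m v ≠ 0 := by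
      have := add_sum_erase T m ha
      omega
    obtain ⟨b, hb, hmb⟩ := exists_ne_zero_of_sum_ne_zero hrest
    exact h a ha b (mem_of_mem_erase hb) (single_add_single_le_iff.2
      ⟨by omega, by omega, fun hab => absurd hab (ne_of_mem_erase hb).symm⟩)

theorem forall_not_single_add_single_le_iff {S T : Finset σ} (hST : Disjoint S T)
    (m : σ →₀ ℕ) :
    (∀ a ∈ S, ∀ b ∈ T, ¬ single a 1 + single b 1 ≤ m) ↔
      ∑ v ∈ S, m v = 0 ∨ ∑ v ∈ T, m v = 0 := by
  simp only [sum_eq_zero_iff]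
  constructor
  · intro h
    by_contra! ⟨⟨a, ha, hma⟩, ⟨b, hb, hmb⟩⟩
    exact h a ha b hb (single_add_single_le_iff.2
      ⟨by omega, by omega, fun hab => absurd (hab ▸ hb) (disjoint_left.1 hST ha)⟩)
  · rintro h a ha b hb hle
    obtain ⟨h1, h2, -⟩ := single_add_single_le_iff.1 hle
    rcases h with h | h
    · exact absurd (h a ha) (by omega)
    · exact absurd (h b hb) (by omega)

omit [DecidableEq σ] in
theorem sum_apply_eq_zero_of_support_subset {m : σ →₀ ℕ} {A T : Finset σ} (hA : m.support ⊆ A)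
    (hAT : Disjoint A T) : ∑ v ∈ T, m v = 0 :=
  sum_eq_zero fun _ hv => notMem_support_iff.1 fun hm => disjoint_left.1 hAT (hA hm) hv

theorem support_subset_insert_of_sum_apply_eq_zero {m : σ →₀ ℕ} {z : σ} {A T : Finset σ}
    (hsupp : m.support ⊆ insert z (A ∪ T)) (hT : ∑ v ∈ T, m v = 0) : m.support ⊆ insert z A := by
  intro v hv
  have hvT : v ∉ T := fun h => mem_support_iff.1 hv (sum_eq_zero_iff.1 hT v h)
  simpa [hvT] using hsupp hv

section PivotFamily

variable (z p : σ) (T : Finset σ)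

noncomputable def pivotFamily (w n : ℕ) : Finset (σ →₀ ℕ) :=
  (range (n / w) ×ˢ T).image fun cv => single z (n - w * (cv.1 + 1)) + single p cv.1 + single cv.2 1

variable {z p T}

theorem sum_single_add_single_add_single (hz : z ∉ T) (hp : p ∈ T) {v : σ} (hv : v ∈ T)
    (b c : ℕ) : ∑ u ∈ T, (single z b + single p c + single v 1 : σ →₀ ℕ) u = c + 1 := by
  simp [sum_add_distrib, single_apply, hz, hp, hv]

theorem card_pivotFamily (hz : z ∉ T) (hp : p ∈ T) (w n : ℕ) :
    #(pivotFamily z p T w n) = n / w * #T := by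
  rw [pivotFamily, card_image_of_injOn, card_product, card_range]
  rintro ⟨c, v⟩ hcv ⟨c', v'⟩ hcv' h
  simp only [coe_product, Set.mem_prod, mem_coe] at hcv hcv' h
  have hc : c = c' := by
    have := congrArg (fun m : σ →₀ ℕ => ∑ u ∈ T, m u) h
    simp only [sum_single_add_single_add_single hz hp hcv.2,
      sum_single_add_single_add_single hz hp hcv'.2] at this
    omega
  subst hc
  rw [add_left_cancel_iff, single_left_inj one_ne_zero] at h
  rw [h]

theorem eq_single_add_single_add_single_of_apply (hz : z ∉ T) (hp : p ∈ T) {v : σ} (hv : v ∈ T)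
    {m : σ →₀ ℕ} {c : ℕ} (hout : ∀ u, u ≠ z → u ∉ T → m u = 0) (hmp : m p = c + single v 1 p)
    (hrest : ∀ u ∈ T.erase p, m u = single v 1 u) :
    m = single z (m z) + single p c + single v 1 := by
  have hpz : p ≠ z := ne_of_mem_of_not_mem hp hz
  have hvz : v ≠ z := ne_of_mem_of_not_mem hv hz
  ext u
  rcases eq_or_ne u z with rfl | huz
  · simp [hpz, hvz]
  rcases eq_or_ne u p with rfl | hup
  · simp [single_apply, huz.symm, hmp]
  by_cases huT : u ∈ T
  · simp [single_apply, huz.symm, hup.symm, hrest u (mem_erase.2 ⟨hup, huT⟩)]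
  · simp [huz.symm, hup.symm, hout u huz huT, ne_of_mem_of_not_mem hv huT]

theorem exists_eq_single_add_single_add_single (hz : z ∉ T) (hp : p ∈ T) {m : σ →₀ ℕ}
    (hsupp : m.support ⊆ insert z T) (hle : ∑ v ∈ T.erase p, m v ≤ 1) (hpos : ∑ v ∈ T, m v ≠ 0) :
    ∃ c, ∃ v ∈ T, m = single z (m z) + single p c + single v 1 := by
  have hout : ∀ u, u ≠ z → u ∉ T → m u = 0 := fun u huz huT =>
    notMem_support_iff.1 fun hu => by simpa [huz, huT] using hsupp hu
  have hsplit := add_sum_erase T m hp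
  by_cases h0 : ∑ v ∈ T.erase p, m v = 0
  · refine ⟨m p - 1, p, hp, eq_single_add_single_add_single_of_apply hz hp hp hout ?_ ?_⟩
    · simp only [single_eq_same]; omega
    · intro u hu
      rw [sum_eq_zero_iff.1 h0 u hu, single_eq_of_ne (ne_of_mem_erase hu)]
  · obtain ⟨v, hv, hmv⟩ := exists_ne_zero_of_sum_ne_zero h0
    have hsplit' := add_sum_erase _ m hv
    have hzero : ∀ u ∈ (T.erase p).erase v, m u = 0 := sum_eq_zero_iff.1 (by omega)
    refine ⟨m p, v, mem_of_mem_erase hv,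
      eq_single_add_single_add_single_of_apply hz hp (mem_of_mem_erase hv) hout ?_ ?_⟩
    · rw [single_eq_of_ne (ne_of_mem_erase hv).symm, add_zero]
    · intro u hu
      rcases eq_or_ne u v with rfl | huv
      · simp only [single_eq_same]; omega
      · rw [hzero u (mem_erase.2 ⟨huv, hu⟩), single_eq_of_ne huv]

omit [DecidableEq σ] in
theorem weight_single_add_single_add_single {wt : σ → ℕ} {w : ℕ} (hwz : wt z = 1)
    (hwT : ∀ v ∈ T, wt v = w) (hp : p ∈ T) {v : σ} (hv : v ∈ T) (b c : ℕ) :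
    weight wt (single z b + single p c + single v 1) = b + w * (c + 1) := by
  simp only [map_add, weight_single, smul_eq_mul, hwz, hwT p hp, hwT v hv]
  ring

theorem mem_pivotFamily_iff {wt : σ → ℕ} {w n : ℕ} (hz : z ∉ T) (hp : p ∈ T) (hwz : wt z = 1)
    (hwT : ∀ v ∈ T, wt v = w) (hw : 0 < w) {m : σ →₀ ℕ} :
    m ∈ pivotFamily z p T w n ↔ m.support ⊆ insert z T ∧ weight wt m = n ∧
      ∑ v ∈ T.erase p, m v ≤ 1 ∧ ∑ v ∈ T, m v ≠ 0 := by
  have hlt (c : ℕ) : c < n / w ↔ w * (c + 1) ≤ n := by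
    rw [← Nat.succ_le_iff, Nat.le_div_iff_mul_le hw, mul_comm]
  constructor
  · simp only [pivotFamily, mem_image, mem_product, mem_range]
    rintro ⟨⟨c, v⟩, ⟨hc, hv⟩, rfl⟩
    rw [hlt] at hc
    refine ⟨?_, ?_, ?_, ?_⟩
    · intro u hu
      by_contra hu'
      rw [mem_insert, not_or] at hu'
      simp [Ne.symm hu'.1, ne_of_mem_of_not_mem hp hu'.2, ne_of_mem_of_not_mem hv hu'.2] at hu
    · rw [weight_single_add_single_add_single hwz hwT hp hv]
      omega
    · have hz' : z ∉ T.erase p := fun h => hz (mem_of_mem_erase h)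
      simp only [Finsupp.add_apply, sum_add_distrib, single_apply, Finset.sum_ite_eq, hz',
        notMem_erase, if_false]
      split_ifs <;> omega
    · rw [sum_single_add_single_add_single hz hp hv]
      omega
  · rintro ⟨hsupp, hwt, hle, hpos⟩
    obtain ⟨c, v, hv, hm⟩ := exists_eq_single_add_single_add_single hz hp hsupp hle hpos
    rw [hm, weight_single_add_single_add_single hwz hwT hp hv] at hwt
    rw [hm, pivotFamily, mem_image]
    refine ⟨(c, v), mem_product.2 ⟨mem_range.2 ((hlt c).2 (by omega)), hv⟩, ?_⟩
    rw [← hwt, Nat.add_sub_cancel]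

end PivotFamily

end Generic

-- For `d = D + 2`, `e = E + 2`: `xHead D = {x₀, …, x_{d-2}}`, `yVars E` is the set of all
-- `y`-variables, and `Sum.inl (D + 1) = x_{d-1}` is the variable that occurs in no generator.
def xHead (D : ℕ) : Finset (ℕ ⊕ ℕ) := (range (D + 1)).map Function.Embedding.inl

def yVars (E : ℕ) : Finset (ℕ ⊕ ℕ) := (range (E + 2)).map Function.Embedding.inr

theorem inl_mem_xHead {D i : ℕ} : Sum.inl i ∈ xHead D ↔ i ≤ D := by
  simp [xHead]

theorem inr_notMem_xHead {D i : ℕ} : Sum.inr i ∉ xHead D := by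
  simp [xHead]

theorem inr_mem_yVars {E i : ℕ} : Sum.inr i ∈ yVars E ↔ i ≤ E + 1 := by
  simp [yVars, Nat.lt_succ_iff]

theorem inl_notMem_yVars {E i : ℕ} : Sum.inl i ∉ yVars E := by
  simp [yVars]

theorem disjoint_xHead_yVars (D E : ℕ) : Disjoint (xHead D) (yVars E) := by
  simp [xHead, yVars, disjoint_left]

def IsGeneratorPair (D E : ℕ) (a b : ℕ ⊕ ℕ) : Prop :=
  (a ∈ (xHead D).erase (Sum.inl 0) ∧ b ∈ (xHead D).erase (Sum.inl 0)) ∨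
  (a ∈ (yVars E).erase (Sum.inr (E + 1)) ∧ b ∈ (yVars E).erase (Sum.inr (E + 1))) ∨
  (a ∈ xHead D ∧ b ∈ yVars E)

theorem X_mul_X_eq_monomial {k : Type*} [CommSemiring k] (a b : ℕ ⊕ ℕ) :
    (X a * X b : MvPolynomial (ℕ ⊕ ℕ) k) = monomial (single a 1 + single b 1) 1 := by
  rw [X, X, monomial_mul, one_mul]

theorem wrcJGens12_eq_image (k : Type*) [Field k] (D E : ℕ) :
    wrcJGens12 k (D + 2) (E + 2) = (fun s => monomial s 1) ''
      {g | ∃ a b, IsGeneratorPair D E a b ∧ g = single a 1 + single b 1} := by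
  ext p
  simp only [wrcJGens12, Nat.add_sub_cancel, Set.mem_union, Set.mem_ofPred_eq, Set.mem_image,
    X_mul_X_eq_monomial]
  constructor
  · rintro ((((⟨i, j, hij, hj, rfl⟩ | ⟨i, j, hij, hj, rfl⟩) | ⟨i, j, hi, hj, rfl⟩) | ⟨i, hi, rfl⟩) |
      ⟨i, hi, rfl⟩)
    all_goals refine ⟨_, ⟨_, _, ?_, rfl⟩, rfl⟩
    all_goals simp [IsGeneratorPair, inl_mem_xHead, inr_mem_yVars, inr_notMem_xHead, inl_notMem_yVars]
    all_goals omega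
  · rintro ⟨_, ⟨a, b, hab, rfl⟩, rfl⟩
    rcases a with i | i <;> rcases b with j | j <;>
      simp only [IsGeneratorPair, mem_erase, ne_eq, Sum.inl.injEq, Sum.inr.injEq, reduceCtorEq,
        not_false_eq_true, false_and, and_false, or_false, false_or, inl_mem_xHead,
        inr_mem_yVars, inr_notMem_xHead, inl_notMem_yVars] at hab
    · obtain ⟨⟨hi0, hi⟩, ⟨hj0, hj⟩⟩ := hab
      obtain ⟨i, rfl⟩ := Nat.exists_eq_add_one_of_ne_zero hi0
      obtain ⟨j, rfl⟩ := Nat.exists_eq_add_one_of_ne_zero hj0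
      rcases le_total i j with h | h
      · exact Or.inl (Or.inl (Or.inl (Or.inl ⟨i, j + 1, by omega, hj, rfl⟩)))
      · exact Or.inl (Or.inl (Or.inl (Or.inl ⟨j, i + 1, by omega, hi, by rw [add_comm]⟩)))
    · obtain ⟨hi, hj⟩ := hab
      rcases j with _ | j
      · exact Or.inl (Or.inr ⟨i, hi, rfl⟩)
      · exact Or.inl (Or.inl (Or.inr ⟨j, i, by omega, hi, rfl⟩))
    · obtain ⟨⟨hi1, hi⟩, ⟨hj1, hj⟩⟩ := hab
      rcases i with _ | i
      · exact Or.inr ⟨j, by omega, rfl⟩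
      rcases j with _ | j
      · exact Or.inr ⟨i + 1, by omega, by rw [add_comm]⟩
      rcases le_total i j with h | h
      · exact Or.inl (Or.inl (Or.inl (Or.inr ⟨i, j + 1, by omega, by omega, rfl⟩)))
      · exact Or.inl (Or.inl (Or.inl (Or.inr ⟨j, i + 1, by omega, by omega, by rw [add_comm]⟩)))

def IsStandard (D E : ℕ) (m : ℕ ⊕ ℕ →₀ ℕ) : Prop :=
  ∑ v ∈ (xHead D).erase (Sum.inl 0), m v ≤ 1 ∧ ∑ v ∈ (yVars E).erase (Sum.inr (E + 1)), m v ≤ 1 ∧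
    (∑ v ∈ xHead D, m v = 0 ∨ ∑ v ∈ yVars E, m v = 0)

theorem monomial_notMem_span_wrcJGens12_iff (k : Type*) [Field k] (D E : ℕ) (m : ℕ ⊕ ℕ →₀ ℕ) :
    monomial m (1 : k) ∉ Ideal.span (wrcJGens12 k (D + 2) (E + 2)) ↔ IsStandard D E m := by
  classical
  rw [wrcJGens12_eq_image, mem_ideal_span_monomial_image, support_monomial,
    if_neg (one_ne_zero (α := k)), IsStandard, sum_apply_le_one_iff, sum_apply_le_one_iff,
    ← forall_not_single_add_single_le_iff (disjoint_xHead_yVars D E)]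
  simp only [mem_singleton, forall_eq, Set.mem_ofPred_eq, IsGeneratorPair]
  grind

noncomputable def standardMonomials (D E n : ℕ) : Finset (ℕ ⊕ ℕ →₀ ℕ) :=
  insert (single (Sum.inl (D + 1)) n)
    (pivotFamily (Sum.inl (D + 1)) (Sum.inl 0) (xHead D) 1 n ∪
      pivotFamily (Sum.inl (D + 1)) (Sum.inr (E + 1)) (yVars E) (E + 2) n)

section StandardMonomials

variable {D E n : ℕ}

theorem mem_xFamily_iff {m : ℕ ⊕ ℕ →₀ ℕ} :
    m ∈ pivotFamily (Sum.inl (D + 1)) (Sum.inl 0) (xHead D) 1 n ↔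
      m.support ⊆ insert (Sum.inl (D + 1)) (xHead D) ∧
      weight (Sum.elim (fun _ => 1) (fun _ => E + 2)) m = n ∧
      ∑ v ∈ (xHead D).erase (Sum.inl 0), m v ≤ 1 ∧ ∑ v ∈ xHead D, m v ≠ 0 :=
  mem_pivotFamily_iff (by simp [inl_mem_xHead]) (by simp [inl_mem_xHead]) (by rfl)
    (fun v hv => by obtain ⟨i, -, rfl⟩ := mem_map.1 hv; rfl) one_pos

theorem mem_yFamily_iff {m : ℕ ⊕ ℕ →₀ ℕ} :
    m ∈ pivotFamily (Sum.inl (D + 1)) (Sum.inr (E + 1)) (yVars E) (E + 2) n ↔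
      m.support ⊆ insert (Sum.inl (D + 1)) (yVars E) ∧
      weight (Sum.elim (fun _ => 1) (fun _ => E + 2)) m = n ∧
      ∑ v ∈ (yVars E).erase (Sum.inr (E + 1)), m v ≤ 1 ∧ ∑ v ∈ yVars E, m v ≠ 0 :=
  mem_pivotFamily_iff inl_notMem_yVars (by simp [inr_mem_yVars]) (by rfl)
    (fun v hv => by obtain ⟨i, -, rfl⟩ := mem_map.1 hv; rfl) (by omega)

theorem mem_standardMonomials_iff {m : ℕ ⊕ ℕ →₀ ℕ} :
    m ∈ standardMonomials D E n ↔
      m.support ⊆ insert (Sum.inl (D + 1)) (xHead D ∪ yVars E) ∧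
      weight (Sum.elim (fun _ => 1) (fun _ => E + 2)) m = n ∧ IsStandard D E m := by
  have hzx : Sum.inl (D + 1) ∉ xHead D := by simp [inl_mem_xHead]
  have hzy : (Sum.inl (D + 1) : ℕ ⊕ ℕ) ∉ yVars E := inl_notMem_yVars
  rw [standardMonomials, mem_insert, mem_union, mem_xFamily_iff, mem_yFamily_iff, IsStandard]
  constructor
  · rintro (rfl | ⟨hsupp, hwt, hle, -⟩ | ⟨hsupp, hwt, hle, -⟩)
    · refine ⟨support_single_subset.trans (by simp), by simp [weight_single], ?_⟩
      simp [single_apply, hzx, hzy]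
    · have hy : ∑ v ∈ yVars E, m v = 0 :=
        sum_apply_eq_zero_of_support_subset hsupp (by simp [disjoint_xHead_yVars, hzy])
      refine ⟨hsupp.trans (insert_subset_insert _ subset_union_left), hwt, hle, ?_, Or.inr hy⟩
      exact (sum_le_sum_of_subset (erase_subset _ _)).trans (by omega)
    · have hx : ∑ v ∈ xHead D, m v = 0 :=
        sum_apply_eq_zero_of_support_subset hsupp (by simp [(disjoint_xHead_yVars D E).symm, hzx])
      refine ⟨hsupp.trans (insert_subset_insert _ subset_union_right), hwt, ?_, hle, Or.inl hx⟩
      exact (sum_le_sum_of_subset (erase_subset _ _)).trans (by omega)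
  · rintro ⟨hsupp, hwt, hxle, hyle, hxy⟩
    by_cases hy : ∑ v ∈ yVars E, m v = 0
    · have hsuppX := support_subset_insert_of_sum_apply_eq_zero hsupp hy
      by_cases hx : ∑ v ∈ xHead D, m v = 0
      · left
        have hsuppz : m.support ⊆ {Sum.inl (D + 1)} := by
          simpa using support_subset_insert_of_sum_apply_eq_zero (A := ∅) (by simpa using hsuppX) hx
        rw [support_subset_singleton] at hsuppz
        rw [hsuppz, weight_single] at hwt
        rw [hsuppz, ← hwt]
        simp
      · exact Or.inr (Or.inl ⟨hsuppX, hwt, hxle, hx⟩)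
    · rw [union_comm] at hsupp
      have hsuppY := support_subset_insert_of_sum_apply_eq_zero hsupp (hxy.resolve_right hy)
      exact Or.inr (Or.inr ⟨hsuppY, hwt, hyle, hy⟩)

theorem card_standardMonomials :
    #(standardMonomials D E n) = n * (D + 1) + n / (E + 2) * (E + 2) + 1 := by
  have hsingle : single (Sum.inl (D + 1)) n ∉
      pivotFamily (Sum.inl (D + 1)) (Sum.inl 0) (xHead D) 1 n ∪
        pivotFamily (Sum.inl (D + 1)) (Sum.inr (E + 1)) (yVars E) (E + 2) n := by
    simp [mem_xFamily_iff (E := E), mem_yFamily_iff, single_apply, inl_mem_xHead, inl_notMem_yVars]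
  have hdisj : Disjoint (pivotFamily (Sum.inl (D + 1)) (Sum.inl 0) (xHead D) 1 n)
      (pivotFamily (Sum.inl (D + 1)) (Sum.inr (E + 1)) (yVars E) (E + 2) n) := by
    rw [disjoint_left]
    intro m hx hy
    rw [mem_xFamily_iff (E := E)] at hx
    exact (mem_yFamily_iff.1 hy).2.2.2 (sum_apply_eq_zero_of_support_subset hx.1
      (by simp [disjoint_xHead_yVars, inl_notMem_yVars]))
  rw [standardMonomials, card_insert_of_notMem hsingle, card_union_of_disjoint hdisj,
    card_pivotFamily (by simp [inl_mem_xHead]) (by simp [inl_mem_xHead]),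
    card_pivotFamily inl_notMem_yVars (by simp [inr_mem_yVars])]
  simp [xHead, yVars]

theorem support_subset_iff_forall_lt {m : ℕ ⊕ ℕ →₀ ℕ} :
    m.support ⊆ insert (Sum.inl (D + 1)) (xHead D ∪ yVars E) ↔
      (∀ i, m (Sum.inl i) ≠ 0 → i < D + 2) ∧ (∀ i, m (Sum.inr i) ≠ 0 → i < E + 2) := by
  simp only [Finset.subset_iff, Finsupp.mem_support_iff, Sum.forall, mem_insert, mem_union,
    inl_mem_xHead, inr_mem_yVars, inl_notMem_yVars, inr_notMem_xHead, Sum.inl.injEq, reduceCtorEq]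
  grind

end StandardMonomials

end MonomialIdealJ

/-- The number of monomials of weighted degree `qe + r` (`deg xᵢ = 1`, `deg yᵢ = e`)
outside `J` equals `d(qe+r) + 1 − r`; hence `S/J` has the same Hilbert function as `R`. -/
theorem stmt12 (k : Type*) [Field k] (d e : ℕ) (hd : 2 ≤ d) (he : 2 ≤ e)
    (q r : ℕ) (hr : r < e) :
    Nat.card {m : (ℕ ⊕ ℕ) →₀ ℕ //
        (∀ i : ℕ, m (Sum.inl i) ≠ 0 → i < d) ∧
        (∀ i : ℕ, m (Sum.inr i) ≠ 0 → i < e) ∧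
        (m.sum fun v c => c * Sum.elim (fun _ => 1) (fun _ => e) v) = q * e + r ∧
        (monomial m (1 : k)) ∉ Ideal.span (wrcJGens12 k d e)} =
      d * (q * e + r) + 1 - r := by
  obtain ⟨D, rfl⟩ : ∃ D, d = D + 2 := ⟨d - 2, by omega⟩
  obtain ⟨E, rfl⟩ : ∃ E, e = E + 2 := ⟨e - 2, by omega⟩
  have hchar (m : ℕ ⊕ ℕ →₀ ℕ) :
      ((∀ i : ℕ, m (Sum.inl i) ≠ 0 → i < D + 2) ∧ (∀ i : ℕ, m (Sum.inr i) ≠ 0 → i < E + 2) ∧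
        (m.sum fun v c => c * Sum.elim (fun _ => 1) (fun _ => E + 2) v) = q * (E + 2) + r ∧
        monomial m (1 : k) ∉ Ideal.span (wrcJGens12 k (D + 2) (E + 2))) ↔
      m ∈ MonomialIdealJ.standardMonomials D E (q * (E + 2) + r) := by
    rw [MonomialIdealJ.mem_standardMonomials_iff, MonomialIdealJ.support_subset_iff_forall_lt,
      MonomialIdealJ.monomial_notMem_span_wrcJGens12_iff, Finsupp.weight_apply]
    simp only [smul_eq_mul, and_assoc]
  have hq : (q * (E + 2) + r) / (E + 2) = q := by
    rw [add_comm, Nat.add_mul_div_right _ _ (by omega), Nat.div_eq_of_lt hr, zero_add]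
  rw [Nat.card_congr (Equiv.subtypeEquivRight hchar), Nat.card_eq_finsetCard,
    MonomialIdealJ.card_standardMonomials, hq]
  generalize q * (E + 2) = Q
  have : (D + 2) * (Q + r) = (Q + r) * (D + 1) + Q + r := by ring
  omega
end

section
/- The bigraded generating function 1 + ∑_{u=1}^∞ [ ((d−1)u+1) w^u + e ∑_{i=1}^u w^{u+i(e−1)} ] z^u equals (1 + (d−2)wz + (e−1)w^e z − (d+e−2) w^{e+1} z²) / ((1−wz)²(1−w^e z)), as formal power series in z with coefficients in ℚ[[w]] (equivalently in ℚ[[w,z]]). -/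
/-!
Put `a = w` and `b = w ^ e`. Since `w ^ (u + i (e - 1)) = a ^ (u - i) b ^ i`, the inner sum is the
coefficient of `z ^ u` in `G_a G_b` minus `a ^ u`, where `G_c = ∑ cⁿ zⁿ = 1 / (1 - c z)`; together with
`(d - 1) u + 1 = (d - 1)(u + 1) + (2 - d)` the series becomes
`(d - 1) G_a² + (2 - d - e) G_a + e G_a G_b`, and multiplying by `(1 - a z)² (1 - b z)` leaves
`(d - 1)(1 - b z) + (2 - d - e)(1 - a z)(1 - b z) + e (1 - a z)`, which is the stated numerator.
-/

open PowerSeries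

namespace PowerSeries

variable {R : Type*} [CommRing R]

theorem mk_pow_mul_one_sub_C_mul_X (a : R) : mk (a ^ ·) * (1 - C a * X) = 1 := by
  simpa [rescale_mk, rescale_X] using congrArg (rescale a) (mk_one_mul_one_sub_eq_one R)

theorem coeff_mk_pow_mul_mk_pow (a b : R) (n : ℕ) :
    coeff n (mk (a ^ ·) * mk (b ^ ·)) = ∑ i ∈ Finset.range (n + 1), a ^ (n - i) * b ^ i := by
  rw [mul_comm, coeff_mul,
    Finset.Nat.sum_antidiagonal_eq_sum_range_succ fun i j => coeff i (mk (b ^ ·)) * coeff j (mk (a ^ ·))]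
  simp only [coeff_mk, mul_comm]

theorem coeff_mk_pow_sq (a : R) (n : ℕ) : coeff n (mk (a ^ ·) ^ 2) = (n + 1) * a ^ n := by
  rw [sq, coeff_mk_pow_mul_mk_pow]
  calc ∑ i ∈ Finset.range (n + 1), a ^ (n - i) * a ^ i
      = ∑ _i ∈ Finset.range (n + 1), a ^ n :=
        Finset.sum_congr rfl fun i hi => by
          rw [← pow_add, Nat.sub_add_cancel (Nat.lt_succ_iff.mp (Finset.mem_range.mp hi))]
    _ = (n + 1) * a ^ n := by simp [nsmul_eq_mul]

theorem sum_Icc_pow_mul_pow (a b : R) (n : ℕ) :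
    ∑ i ∈ Finset.Icc 1 n, a ^ (n - i) * b ^ i = coeff n (mk (a ^ ·) * mk (b ^ ·)) - a ^ n := by
  rw [coeff_mk_pow_mul_mk_pow, Finset.range_eq_Ico, Finset.sum_eq_sum_Ico_succ_bot n.succ_pos]
  simp [Finset.Ico_add_one_right_eq_Icc]

end PowerSeries

/-- The bigraded Hilbert series identity
`1 + ∑_{u=1}^∞ [((d−1)u+1)w^u + e ∑_{i=1}^u w^{u+i(e−1)}] z^u
  = (1 + (d−2)wz + (e−1)w^e z − (d+e−2)w^{e+1}z²) / ((1−wz)²(1−w^e z))`,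
as formal power series in `z` with coefficients in `ℚ[[w]]`
(stated with denominators cleared; the inner variable `w` is `PowerSeries.X : ℚ[[w]]`,
the outer variable `z` is `PowerSeries.X` and `W` denotes the constant series `w`). -/
theorem stmt14 (d e : ℕ) (hd : 1 ≤ d) (he : 2 ≤ e) :
    (PowerSeries.mk (fun u =>
        ((((d - 1) * u + 1 : ℕ) : PowerSeries ℚ) * X ^ u +
          (e : PowerSeries ℚ) * ∑ i ∈ Finset.Icc 1 u, X ^ (u + i * (e - 1)))) :
        PowerSeries (PowerSeries ℚ)) *
      ((1 - PowerSeries.C (R := PowerSeries ℚ) X * X) ^ 2 *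
        (1 - PowerSeries.C (R := PowerSeries ℚ) X ^ e * X)) =
    1 + ((d : PowerSeries (PowerSeries ℚ)) - 2) * PowerSeries.C (R := PowerSeries ℚ) X * X +
      ((e : PowerSeries (PowerSeries ℚ)) - 1) * PowerSeries.C (R := PowerSeries ℚ) X ^ e * X -
      ((d : PowerSeries (PowerSeries ℚ)) + (e : PowerSeries (PowerSeries ℚ)) - 2) *
        PowerSeries.C (R := PowerSeries ℚ) X ^ (e + 1) * X ^ 2 := by
  set w : ℚ⟦X⟧ := X
  have hsplit : ∀ u, ∀ i ∈ Finset.Icc 1 u, w ^ (u + i * (e - 1)) = w ^ (u - i) * (w ^ e) ^ i := by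
    intro u i hi
    rw [← pow_mul, ← pow_add]
    congr 1
    have hiu := (Finset.mem_Icc.mp hi).2
    zify [hiu, (by omega : 1 ≤ e)]
    ring
  have hseries : (mk fun u => (((d - 1) * u + 1 : ℕ) : ℚ⟦X⟧) * w ^ u +
        (e : ℚ⟦X⟧) * ∑ i ∈ Finset.Icc 1 u, w ^ (u + i * (e - 1))) =
      C ((d : ℚ⟦X⟧) - 1) * mk (w ^ ·) ^ 2 + C (2 - (d : ℚ⟦X⟧) - e) * mk (w ^ ·) +
        C (e : ℚ⟦X⟧) * (mk (w ^ ·) * mk ((w ^ e) ^ ·)) := by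
    ext1 u
    rw [coeff_mk, Finset.sum_congr rfl (hsplit u), sum_Icc_pow_mul_pow]
    simp only [map_add, coeff_C_mul, coeff_mk_pow_sq, coeff_mk]
    push_cast [Nat.cast_sub hd]
    ring
  have hw := mk_pow_mul_one_sub_C_mul_X w
  have hwe := mk_pow_mul_one_sub_C_mul_X (w ^ e)
  rw [hseries]
  simp only [map_sub, map_natCast, map_one, map_pow, map_ofNat] at hwe ⊢
  set G : ℚ⟦X⟧⟦X⟧ := mk (w ^ ·)
  set H : ℚ⟦X⟧⟦X⟧ := mk ((w ^ e) ^ ·)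
  linear_combination
    (((d : ℚ⟦X⟧⟦X⟧) - 1) * (1 - C w ^ e * X) * (G * (1 - C w * X) + 1) +
        (2 - d - e) * (1 - C w * X) * (1 - C w ^ e * X) +
        e * (1 - C w * X) * H * (1 - C w ^ e * X)) * hw +
      e * (1 - C w * X) * hwe
end

section
/- Under the grading of the associated graded ring where each xᵢ and each yᵢ has degree 1, the coefficient of w^i z^i in (1+wz)²(1+w^e z)/(1 − (d−2)wz − (e−1)w^e z − (d+e−2)w^{e+1}z²) (for e ≥ 2) equals: 1 if i=0, d if i=1, and (d−2)^{i−2}(d−1)² if i ≥ 2. -/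
/-!
Every monomial `w ^ a * z ^ b` of the numerator and the denominator has `b ≤ a`. On series with
this property, taking the diagonal `∑ aᵢᵢ tⁱ` is multiplicative, because a product of two such
monomials lies on the diagonal only when both factors do. It is therefore a ring homomorphism
sending `w` to `0` and `w * z` to `t`, so the diagonal of the quotient is
`(1 + t) ^ 2 / (1 - (d - 2) t)`, whose coefficients are `1`, `d` and `(d - 2) ^ (i - 2) (d - 1) ^ 2`.
-/

open MvPowerSeries Finset.HasAntidiagonal

namespace MvPowerSeries

variable (R : Type*) [CommRing R]

/-- Series in `w = X 0`, `z = X 1` whose monomials `w ^ a * z ^ b` all have `b ≤ a`. -/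
def belowDiagonal : Subring (MvPowerSeries (Fin 2) R) where
  carrier := {f | ∀ m : Fin 2 →₀ ℕ, m 0 < m 1 → coeff m f = 0}
  zero_mem' _ _ := map_zero _
  one_mem' m hm := by
    rw [coeff_one, if_neg]
    rintro rfl
    simp at hm
  add_mem' hf hg m hm := by rw [map_add, hf m hm, hg m hm, add_zero]
  neg_mem' hf m hm := by rw [map_neg, hf m hm, neg_zero]
  mul_mem' {f g} hf hg m hm := by
    rw [coeff_mul]
    refine Finset.sum_eq_zero fun x hx => ?_
    rw [mem_antidiagonal] at hx
    have h0 : x.1 0 + x.2 0 = m 0 := by rw [← hx]; rfl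
    have h1 : x.1 1 + x.2 1 = m 1 := by rw [← hx]; rfl
    by_cases hx1 : x.1 0 < x.1 1
    · rw [hf _ hx1, zero_mul]
    · rw [hg _ (by omega), mul_zero]

variable {R}

lemma X_zero_mem_belowDiagonal : X 0 ∈ belowDiagonal R := by
  intro m hm
  rw [coeff_X, if_neg]
  rintro rfl
  simp at hm

lemma X_zero_mul_X_one_mem_belowDiagonal : X 0 * X 1 ∈ belowDiagonal R := by
  intro m hm
  rw [X_def, X_def, monomial_mul_monomial, coeff_monomial, if_neg]
  rintro rfl
  simp at hm

lemma inv_mem_belowDiagonal {k : Type*} [Field k] {f : MvPowerSeries (Fin 2) k}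
    (hf : f ∈ belowDiagonal k) : f⁻¹ ∈ belowDiagonal k := by
  intro m
  induction m using WellFoundedLT.induction with
  | ind m ih =>
    intro hm
    rw [coeff_inv, if_neg (by rintro rfl; simp at hm), Finset.sum_eq_zero, mul_zero]
    intro x hx
    rw [mem_antidiagonal] at hx
    have h0 : x.1 0 + x.2 0 = m 0 := by rw [← hx]; rfl
    have h1 : x.1 1 + x.2 1 = m 1 := by rw [← hx]; rfl
    split_ifs with hlt
    · by_cases hx1 : x.1 0 < x.1 1
      · rw [hf _ hx1, zero_mul]
      · rw [ih _ hlt (by omega), mul_zero]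
    · rfl

noncomputable abbrev diagExp (i : ℕ) : Fin 2 →₀ ℕ := Finsupp.single 0 i + Finsupp.single 1 i

@[simp]
lemma diagExp_zero : diagExp 0 = 0 := by
  simp

lemma eq_diagExp {m : Fin 2 →₀ ℕ} (h : m 0 = m 1) : m = diagExp (m 0) := by
  ext j
  fin_cases j <;> simp [h]

lemma diagExp_injective : Function.Injective diagExp := fun i j h => by
  simpa using DFunLike.congr_fun h 0

lemma coeff_diagExp_mul {f g : MvPowerSeries (Fin 2) R} (hf : f ∈ belowDiagonal R)
    (hg : g ∈ belowDiagonal R) (i : ℕ) :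
    coeff (diagExp i) (f * g) =
      ∑ p ∈ antidiagonal i, coeff (diagExp p.1) f * coeff (diagExp p.2) g := by
  rw [coeff_mul]
  symm
  refine Finset.sum_bij_ne_zero (fun p _ _ => (diagExp p.1, diagExp p.2)) ?_ ?_ ?_ ?_
  · intro p hp _
    rw [mem_antidiagonal] at hp
    rw [mem_antidiagonal, ← hp]
    simp only [diagExp, Finsupp.single_add]
    abel
  · intro p _ _ q _ _ h
    simp only [Prod.mk.injEq, diagExp_injective.eq_iff] at h
    exact Prod.ext h.1 h.2
  · intro x hx hne
    rw [mem_antidiagonal] at hx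
    have h0 : x.1 0 + x.2 0 = i := by simpa using congrArg (· 0) hx
    have h1 : x.1 1 + x.2 1 = i := by simpa using congrArg (· 1) hx
    have hx1 : ¬ x.1 0 < x.1 1 := fun h => hne (by rw [hf _ h, zero_mul])
    have hx2 : ¬ x.2 0 < x.2 1 := fun h => hne (by rw [hg _ h, mul_zero])
    refine ⟨(x.1 0, x.2 0), by simpa using h0, ?_, ?_⟩
    · rwa [← eq_diagExp (by omega), ← eq_diagExp (by omega)]
    · rw [← eq_diagExp (m := x.1) (by omega), ← eq_diagExp (m := x.2) (by omega)]
  · intros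
    rfl

lemma coeff_diagExp_one (i : ℕ) :
    coeff (diagExp i) (1 : MvPowerSeries (Fin 2) R) = if i = 0 then 1 else 0 := by
  rw [coeff_one]
  exact if_congr (diagExp_injective.eq_iff' diagExp_zero) rfl rfl

/-- The diagonal `∑ aᵢᵢ tⁱ` of `∑ aₐᵦ wᵃ zᵇ`. -/
noncomputable def diagonal : belowDiagonal R →+* PowerSeries R where
  toFun f := PowerSeries.mk fun i => coeff (diagExp i) (f : MvPowerSeries (Fin 2) R)
  map_one' := by
    ext i
    simp [coeff_diagExp_one, PowerSeries.coeff_one]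
  map_mul' f g := by
    ext i
    simp [PowerSeries.coeff_mul, coeff_diagExp_mul f.2 g.2]
  map_zero' := by
    ext
    simp
  map_add' f g := by
    ext
    simp

@[simp]
lemma coeff_diagonal (f : belowDiagonal R) (i : ℕ) :
    PowerSeries.coeff i (diagonal f) = coeff (diagExp i) (f : MvPowerSeries (Fin 2) R) :=
  PowerSeries.coeff_mk _ fun i => coeff (diagExp i) (f : MvPowerSeries (Fin 2) R)

lemma diagonal_X_zero : diagonal ⟨X 0, X_zero_mem_belowDiagonal⟩ = (0 : PowerSeries R) := by
  ext i
  rw [coeff_diagonal, coeff_X, if_neg, map_zero]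
  intro h
  obtain rfl : i = 0 := by simpa using DFunLike.congr_fun h 1
  simpa using DFunLike.congr_fun h 0

lemma diagonal_X_zero_mul_X_one :
    diagonal ⟨X 0 * X 1, X_zero_mul_X_one_mem_belowDiagonal⟩ =
      (PowerSeries.X : PowerSeries R) := by
  ext i
  rw [coeff_diagonal]
  change coeff _ (X 0 * X 1) = _
  rw [X_def, X_def, monomial_mul_monomial, mul_one, coeff_monomial, PowerSeries.coeff_X]
  exact if_congr diagExp_injective.eq_iff rfl rfl
end MvPowerSeries

namespace PowerSeries

variable {R : Type*} [CommRing R]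

lemma coeff_succ_of_mul_one_sub_C_mul_X {g h : R⟦X⟧} {c : R} (hg : g * (1 - C c * X) = h)
    (n : ℕ) : coeff (n + 1) g = c * coeff n g + coeff (n + 1) h := by
  rw [← hg, mul_sub, mul_one, map_sub, ← mul_assoc, coeff_succ_mul_X, coeff_mul_C]
  ring

lemma coeff_of_mul_one_sub_C_mul_X_eq_one_add_X_sq {g : R⟦X⟧} {c : R}
    (hg : g * (1 - C c * X) = (1 + X) ^ 2) (i : ℕ) :
    coeff i g = if i = 0 then 1 else if i = 1 then c + 2 else c ^ (i - 2) * (c + 1) ^ 2 := by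
  have hsq : (1 + X : R⟦X⟧) ^ 2 = 1 + C 2 * X + X ^ 2 := by
    rw [add_sq, map_ofNat]
    ring
  have hsucc := coeff_succ_of_mul_one_sub_C_mul_X hg
  have h0 : coeff 0 g = 1 := by simpa using congrArg (coeff 0) hg
  have h1 : coeff 1 g = c + 2 := by
    rw [hsucc 0, h0, hsq]
    simp [coeff_X_pow, coeff_one]
  have hn : ∀ n, coeff (n + 2) g = c ^ n * (c + 1) ^ 2 := by
    intro n
    induction n with
    | zero =>
      rw [hsucc 1, h1, hsq]
      simp [coeff_X_pow, coeff_one]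
      ring
    | succ n ih =>
      rw [hsucc (n + 2), ih, hsq]
      simp [coeff_X_pow, coeff_one]
      ring
  rcases i with _ | _ | n
  · simpa using h0
  · simpa using h1
  · simpa using hn n

end PowerSeries

namespace MvPowerSeries

lemma diagonal_mul_inv_mul {k : Type*} [Field k] (f g : belowDiagonal k)
    (hg : constantCoeff (g : MvPowerSeries (Fin 2) k) ≠ 0) :
    diagonal ⟨(f : MvPowerSeries (Fin 2) k) * (g : MvPowerSeries (Fin 2) k)⁻¹,
        mul_mem f.2 (inv_mem_belowDiagonal g.2)⟩ * diagonal g = diagonal f := by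
  rw [← map_mul]
  congr 1
  ext1
  exact (mul_assoc _ _ _).trans (by rw [MvPowerSeries.inv_mul_cancel _ hg, mul_one])

lemma coeff_diagExp_mul_inv {k : Type*} [Field k] (f g : belowDiagonal k) {c : k}
    (hf : diagonal f = (1 + PowerSeries.X) ^ 2)
    (hg : diagonal g = 1 - PowerSeries.C c * PowerSeries.X) (i : ℕ) :
    coeff (diagExp i) ((f : MvPowerSeries (Fin 2) k) * (g : MvPowerSeries (Fin 2) k)⁻¹) =
      if i = 0 then 1 else if i = 1 then c + 2 else c ^ (i - 2) * (c + 1) ^ 2 := by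
  have hg0 : constantCoeff (g : MvPowerSeries (Fin 2) k) = 1 := by
    simpa using congrArg (PowerSeries.coeff 0) hg
  have key := diagonal_mul_inv_mul f g (by rw [hg0]; exact one_ne_zero)
  rw [hf, hg] at key
  rw [← PowerSeries.coeff_of_mul_one_sub_C_mul_X_eq_one_add_X_sq key, coeff_diagonal]

end MvPowerSeries

theorem stmt18_general (d e : ℕ) (he : 2 ≤ e) (i : ℕ) :
    MvPowerSeries.coeff (Finsupp.single (0 : Fin 2) i + Finsupp.single (1 : Fin 2) i)
      ((1 + X (0 : Fin 2) * X 1) ^ 2 * (1 + X (0 : Fin 2) ^ e * X 1) *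
        (1 - ((d : MvPowerSeries (Fin 2) ℚ) - 2) * X (0 : Fin 2) * X 1 -
          ((e : MvPowerSeries (Fin 2) ℚ) - 1) * X (0 : Fin 2) ^ e * X 1 -
          ((d : MvPowerSeries (Fin 2) ℚ) + (e : MvPowerSeries (Fin 2) ℚ) - 2) *
            X (0 : Fin 2) ^ (e + 1) * X 1 ^ 2)⁻¹) =
      if i = 0 then 1
      else if i = 1 then (d : ℚ)
      else ((d : ℚ) - 2) ^ (i - 2) * ((d : ℚ) - 1) ^ 2 := by
  obtain ⟨k, rfl⟩ : ∃ k, e = k + 2 := ⟨e - 2, by omega⟩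
  let w : belowDiagonal ℚ := ⟨X 0, X_zero_mem_belowDiagonal⟩
  let t : belowDiagonal ℚ := ⟨X 0 * X 1, X_zero_mul_X_one_mem_belowDiagonal⟩
  -- numerator and denominator written in `w` and `w * z`, using `w ^ (k + 2) = w ^ (k + 1) * w`
  let num : belowDiagonal ℚ := (1 + t) ^ 2 * (1 + w ^ (k + 1) * t)
  let den : belowDiagonal ℚ := 1 - (d - 2) * t - ((k + 2 : ℕ) - 1) * w ^ (k + 1) * t -
    (d + (k + 2 : ℕ) - 2) * w ^ (k + 1) * t ^ 2
  have hw : diagonal w = 0 := diagonal_X_zero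
  have ht : diagonal t = PowerSeries.X := diagonal_X_zero_mul_X_one
  have h2 : ((2 : belowDiagonal ℚ) : MvPowerSeries (Fin 2) ℚ) = 2 := rfl
  refine Eq.trans ?_ ((coeff_diagExp_mul_inv num den (c := (d : ℚ) - 2)
    (by simp [num, hw, ht]) (by simp [den, hw, ht, map_ofNat]) i).trans ?_)
  · refine congrArg (coeff _) (congrArg₂ (· * ·) ?_ (congrArg Inv.inv ?_)) <;>
      push_cast [num, den, w, t, h2] <;> ring
  · split_ifs <;> ring

/-- The coefficient of `w^i z^i` in
`(1+wz)²(1+w^e z)/(1 − (d−2)wz − (e−1)w^e z − (d+e−2)w^{e+1}z²)` equals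
`1` if `i = 0`, `d` if `i = 1`, and `(d−2)^{i−2}(d−1)²` if `i ≥ 2`.
Here `w = X 0` and `z = X 1` in `ℚ[[w,z]]`. -/
theorem stmt18 (d e : ℕ) (hd : 2 ≤ d) (he : 2 ≤ e) (i : ℕ) :
    MvPowerSeries.coeff (Finsupp.single (0 : Fin 2) i + Finsupp.single (1 : Fin 2) i)
      ((1 + X (0 : Fin 2) * X 1) ^ 2 * (1 + X (0 : Fin 2) ^ e * X 1) *
        (1 - ((d : MvPowerSeries (Fin 2) ℚ) - 2) * X (0 : Fin 2) * X 1 -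
          ((e : MvPowerSeries (Fin 2) ℚ) - 1) * X (0 : Fin 2) ^ e * X 1 -
          ((d : MvPowerSeries (Fin 2) ℚ) + (e : MvPowerSeries (Fin 2) ℚ) - 2) *
            X (0 : Fin 2) ^ (e + 1) * X 1 ^ 2)⁻¹) =
      if i = 0 then 1
      else if i = 1 then (d : ℚ)
      else ((d : ℚ) - 2) ^ (i - 2) * ((d : ℚ) - 1) ^ 2 :=
  stmt18_general d e he i
end

section
/- For e ≥ 2, the coefficient of w^{ei} z^i in the formal power series (1+wz)²(1+w^e z)/(1 − (d−2)wz − (e−1)w^e z − (d+e−2)w^{e+1}z²) equals 1 if i = 0 and e(e−1)^{i−1} if i ≥ 1. -/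
/-!
Give `w^a z^b` the weight `e b - a`. Every monomial of the numerator and of the denominator has
nonnegative weight, and power series supported in nonnegative weight form a subring closed under
inversion, so the quotient `F` is supported there too. The coefficients `f i` of `F` on the
weight-zero strand `w^{ei} z^i` therefore only see the weight-zero parts `1 + w^e z` and
`1 - (e-1) w^e z` of numerator and denominator (for `e ≥ 2`, `wz` and `w^{e+1} z²` have
positive weight), which gives `f 0 = 1` and `f (i+1) = (e-1) f i + [i = 0]`.
-/

open MvPowerSeries

namespace MvPowerSeries

variable {σ : Type*} {w : σ → ℤ}

variable (w) in
def weightNonneg (R : Type*) [CommRing R] : Subring (MvPowerSeries σ R) where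
  carrier := {f | ∀ n, Finsupp.weight w n < 0 → coeff n f = 0}
  mul_mem' {f g} hf hg n hn := by
    classical
    rw [coeff_mul]
    refine Finset.sum_eq_zero fun p hp => ?_
    have hsum : Finsupp.weight w p.1 + Finsupp.weight w p.2 = Finsupp.weight w n := by
      rw [← map_add, Finset.HasAntidiagonal.mem_antidiagonal.mp hp]
    by_cases h : Finsupp.weight w p.1 < 0
    · rw [hf _ h, zero_mul]
    · rw [hg _ (by omega), mul_zero]
  one_mem' n hn := by
    classical
    rw [coeff_one, if_neg]
    rintro rfl
    simp at hn
  add_mem' hf hg n hn := by rw [map_add, hf n hn, hg n hn, add_zero]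
  zero_mem' n _ := map_zero _
  neg_mem' hf n hn := by rw [map_neg, hf n hn, neg_zero]

theorem monomial_mem_weightNonneg {R : Type*} [CommRing R] {n : σ →₀ ℕ}
    (hn : 0 ≤ Finsupp.weight w n) (c : R) : monomial n c ∈ weightNonneg w R := by
  classical
  intro m hm
  rw [coeff_monomial, if_neg]
  rintro rfl
  omega

theorem inv_mem_weightNonneg {k : Type*} [Field k] {f : MvPowerSeries σ k}
    (hf : f ∈ weightNonneg w k) : f⁻¹ ∈ weightNonneg w k := by
  classical
  intro n
  induction n using WellFoundedLT.induction with
  | _ n ih =>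
  intro hn
  rw [coeff_inv, if_neg (by rintro rfl; simp at hn), Finset.sum_eq_zero, mul_zero]
  intro p hp
  split_ifs with hlt
  · have hsum : Finsupp.weight w p.1 + Finsupp.weight w p.2 = Finsupp.weight w n := by
      rw [← map_add, Finset.HasAntidiagonal.mem_antidiagonal.mp hp]
    by_cases h : Finsupp.weight w p.1 < 0
    · rw [hf _ h, zero_mul]
    · rw [ih _ hlt (by omega), mul_zero]
  · rfl

theorem coeff_monomial_mul_eq_zero_of_weight_lt {R : Type*} [CommRing R]
    {f : MvPowerSeries σ R} (hf : f ∈ weightNonneg w R) {m n : σ →₀ ℕ}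
    (h : Finsupp.weight w m < Finsupp.weight w n) (c : R) :
    coeff m (monomial n c * f) = 0 := by
  rw [coeff_monomial_mul]
  split_ifs with hle
  · have hsum := congrArg (Finsupp.weight w) (tsub_add_cancel_of_le hle)
    rw [map_add] at hsum
    rw [hf _ (by omega), mul_zero]
  · rfl

end MvPowerSeries

noncomputable section

namespace TwistedStrand

open Finsupp

abbrev bideg (a b : ℕ) : Fin 2 →₀ ℕ := single 0 a + single 1 b

theorem bideg_le_bideg {a b a' b' : ℕ} : bideg a' b' ≤ bideg a b ↔ a' ≤ a ∧ b' ≤ b := by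
  simp [Finsupp.le_def, Fin.forall_fin_two]

theorem bideg_sub_bideg (a b a' b' : ℕ) : bideg a b - bideg a' b' = bideg (a - a') (b - b') := by
  ext i; fin_cases i <;> simp

theorem bideg_inj {a b a' b' : ℕ} : bideg a b = bideg a' b' ↔ a = a' ∧ b = b' := by
  simp [Finsupp.ext_iff, Fin.forall_fin_two]

theorem bideg_mul_eq_bideg_iff {e i a b : ℕ} :
    bideg (e * i) i = bideg a b ↔ i = b ∧ e * b = a := by
  rw [bideg_inj]
  constructor <;> rintro ⟨rfl, rfl⟩ <;> exact ⟨rfl, rfl⟩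

theorem monomial_bideg (a b : ℕ) (c : ℚ) :
    monomial (bideg a b) c = C c * X 0 ^ a * X 1 ^ b := by
  rw [X_pow_eq, X_pow_eq, ← monomial_zero_eq_C_apply, monomial_mul_monomial,
    monomial_mul_monomial, mul_one, mul_one, zero_add]

def twist (e : ℕ) : Fin 2 → ℤ := ![-1, e]

theorem weight_twist_bideg (e a b : ℕ) : weight (twist e) (bideg a b) = e * b - a := by
  simp only [twist, map_add, weight_single, Int.nsmul_eq_mul, Matrix.cons_val_zero,
    Matrix.cons_val_one, Matrix.cons_val_fin_one]
  ring

variable (d e : ℕ)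

def denom : MvPowerSeries (Fin 2) ℚ :=
  1 - ((d : MvPowerSeries (Fin 2) ℚ) - 2) * X 0 * X 1 -
    ((e : MvPowerSeries (Fin 2) ℚ) - 1) * X 0 ^ e * X 1 -
    ((d : MvPowerSeries (Fin 2) ℚ) + (e : MvPowerSeries (Fin 2) ℚ) - 2) *
      X 0 ^ (e + 1) * X 1 ^ 2

def numer : MvPowerSeries (Fin 2) ℚ := (1 + X 0 * X 1) ^ 2 * (1 + X 0 ^ e * X 1)

theorem denom_eq_sum_monomial :
    denom d e = 1 - monomial (bideg 1 1) ((d : ℚ) - 2) - monomial (bideg e 1) ((e : ℚ) - 1) -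
      monomial (bideg (e + 1) 2) ((d : ℚ) + e - 2) := by
  simp only [denom, monomial_bideg, map_sub, map_add, map_natCast, map_ofNat, map_one]
  ring

theorem numer_eq_sum_monomial :
    numer e = monomial (bideg 0 0) 1 + monomial (bideg 1 1) 2 + monomial (bideg 2 2) 1 +
      monomial (bideg e 1) 1 + monomial (bideg (e + 1) 2) 2 + monomial (bideg (e + 2) 3) 1 := by
  simp only [numer, monomial_bideg, map_one, map_ofNat]
  ring

theorem constantCoeff_denom (he : e ≠ 0) : constantCoeff (denom d e) = 1 := by
  simp [denom, he]

theorem denom_mem_weightNonneg (he : 1 ≤ e) : denom d e ∈ weightNonneg (twist e) ℚ := by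
  rw [denom_eq_sum_monomial]
  refine sub_mem (sub_mem (sub_mem (one_mem _) ?_) ?_) ?_ <;>
    refine monomial_mem_weightNonneg ?_ _ <;> rw [weight_twist_bideg] <;> push_cast <;> omega

theorem numer_mem_weightNonneg (he : 1 ≤ e) : numer e ∈ weightNonneg (twist e) ℚ := by
  rw [numer_eq_sum_monomial]
  refine add_mem (add_mem (add_mem (add_mem (add_mem ?_ ?_) ?_) ?_) ?_) ?_ <;>
    refine monomial_mem_weightNonneg ?_ _ <;> rw [weight_twist_bideg] <;> push_cast <;> omega

theorem coeff_strand_numer (he : 2 ≤ e) (i : ℕ) :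
    coeff (bideg (e * i) i) (numer e) = if i ≤ 1 then 1 else 0 := by
  rw [numer_eq_sum_monomial]
  simp only [map_add, coeff_monomial, bideg_mul_eq_bideg_iff]
  split_ifs <;> first | omega | norm_num

theorem coeff_strand_denom_mul (he : 2 ≤ e) {F : MvPowerSeries (Fin 2) ℚ}
    (hF : F ∈ weightNonneg (twist e) ℚ) (i : ℕ) :
    coeff (bideg (e * (i + 1)) (i + 1)) (denom d e * F) =
      coeff (bideg (e * (i + 1)) (i + 1)) F - ((e : ℚ) - 1) * coeff (bideg (e * i) i) F := by
  have hlt {a b : ℕ} (h : a < e * b) (c : ℚ) :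
      coeff (bideg (e * (i + 1)) (i + 1)) (monomial (bideg a b) c * F) = 0 := by
    refine coeff_monomial_mul_eq_zero_of_weight_lt hF ?_ c
    rw [weight_twist_bideg, weight_twist_bideg]
    push_cast
    linarith
  rw [denom_eq_sum_monomial, sub_mul, sub_mul, sub_mul, one_mul, map_sub, map_sub, map_sub,
    hlt (a := 1) (b := 1) (by omega), hlt (a := e + 1) (b := 2) (by omega), coeff_monomial_mul,
    if_pos, bideg_sub_bideg]
  · rw [show e * (i + 1) - e = e * i by rw [Nat.mul_succ, Nat.add_sub_cancel], Nat.add_sub_cancel]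
    ring
  · rw [bideg_le_bideg]
    exact ⟨Nat.le_mul_of_pos_right _ i.succ_pos, i.succ_pos⟩

theorem coeff_strand_numer_mul_inv_denom (he : 2 ≤ e) (i : ℕ) :
    coeff (bideg (e * i) i) (numer e * (denom d e)⁻¹) =
      if i = 0 then 1 else (e : ℚ) * ((e : ℚ) - 1) ^ (i - 1) := by
  set F := numer e * (denom d e)⁻¹
  have hF : F ∈ weightNonneg (twist e) ℚ :=
    mul_mem (numer_mem_weightNonneg e (by omega))
      (inv_mem_weightNonneg (denom_mem_weightNonneg d e (by omega)))
  have hdenomF : denom d e * F = numer e := by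
    have hunit : constantCoeff (denom d e) ≠ 0 := by simp [constantCoeff_denom d e (by omega)]
    rw [mul_left_comm, MvPowerSeries.mul_inv_cancel _ hunit, mul_one]
  have hrec (j : ℕ) : coeff (bideg (e * (j + 1)) (j + 1)) F =
      ((e : ℚ) - 1) * coeff (bideg (e * j) j) F + if j = 0 then 1 else 0 := by
    have h := coeff_strand_denom_mul d e he hF j
    rw [hdenomF, coeff_strand_numer e he] at h
    simp only [add_le_iff_nonpos_left, nonpos_iff_eq_zero] at h
    linear_combination -h
  have h0 : coeff (bideg (e * 0) 0) F = 1 := by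
    rw [mul_zero, show bideg 0 0 = 0 by simp, coeff_zero_eq_constantCoeff_apply, map_mul,
      constantCoeff_inv, constantCoeff_denom d e (by omega)]
    simp [numer, show e ≠ 0 by omega]
  have hsucc (j : ℕ) : coeff (bideg (e * (j + 1)) (j + 1)) F = e * (e - 1) ^ j := by
    induction j with
    | zero => rw [hrec, h0, if_pos rfl]; ring
    | succ j ih => rw [hrec, ih, if_neg j.succ_ne_zero]; ring
  rcases i with _ | j
  · exact h0
  · exact hsucc j

end TwistedStrand

end

theorem stmt19_general (d e : ℕ) (he : 2 ≤ e) (i : ℕ) :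
    MvPowerSeries.coeff (Finsupp.single (0 : Fin 2) (e * i) + Finsupp.single (1 : Fin 2) i)
      ((1 + X (0 : Fin 2) * X 1) ^ 2 * (1 + X (0 : Fin 2) ^ e * X 1) *
        (1 - ((d : MvPowerSeries (Fin 2) ℚ) - 2) * X (0 : Fin 2) * X 1 -
          ((e : MvPowerSeries (Fin 2) ℚ) - 1) * X (0 : Fin 2) ^ e * X 1 -
          ((d : MvPowerSeries (Fin 2) ℚ) + (e : MvPowerSeries (Fin 2) ℚ) - 2) *
            X (0 : Fin 2) ^ (e + 1) * X 1 ^ 2)⁻¹) =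
      if i = 0 then 1 else (e : ℚ) * ((e : ℚ) - 1) ^ (i - 1) :=
  TwistedStrand.coeff_strand_numer_mul_inv_denom d e he i

/-- The coefficient of `w^{ei} z^i` in
`(1+wz)²(1+w^e z)/(1 − (d−2)wz − (e−1)w^e z − (d+e−2)w^{e+1}z²)` equals
`1` if `i = 0` and `e(e−1)^{i−1}` if `i ≥ 1`.
Here `w = X 0` and `z = X 1` in `ℚ[[w,z]]`. -/
theorem stmt19 (d e : ℕ) (hd : 1 ≤ d) (he : 2 ≤ e) (i : ℕ) :
    MvPowerSeries.coeff (Finsupp.single (0 : Fin 2) (e * i) + Finsupp.single (1 : Fin 2) i)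
      ((1 + X (0 : Fin 2) * X 1) ^ 2 * (1 + X (0 : Fin 2) ^ e * X 1) *
        (1 - ((d : MvPowerSeries (Fin 2) ℚ) - 2) * X (0 : Fin 2) * X 1 -
          ((e : MvPowerSeries (Fin 2) ℚ) - 1) * X (0 : Fin 2) ^ e * X 1 -
          ((d : MvPowerSeries (Fin 2) ℚ) + (e : MvPowerSeries (Fin 2) ℚ) - 2) *
            X (0 : Fin 2) ^ (e + 1) * X 1 ^ 2)⁻¹) =
      if i = 0 then 1 else (e : ℚ) * ((e : ℚ) - 1) ^ (i - 1) :=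
  stmt19_general d e he i
end
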